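/- arXiv:2302.07425 — 10 statements merged into one kernel-verified Lean document; each statement's English description precedes it below -/
import Mathlib

section
/- Let c be a constant with 0 < c < 1/2. For any p ∈ (c, 1−c) and q ∈ (0, p), there exists u ∈ (0, 1) such that p·u^{1−q} + (1−p)·u^{−q} = 1. -/
/-!
Multiplying by `u ^ q` turns the equation into `u ^ q = p * u + (1 - p)`, whose sides agree at
`u = 1`. At `u = 0` the line is above the power; just left of `1` it is below, since at `1` the line
has slope `p` and the power has slope `q < p`. The intermediate value theorem gives the root.
-/

open Set Filter Topology

lemma HasDerivAt.eventually_nhdsLT_lt {f : ℝ → ℝ} {f' x : ℝ} (hf : HasDerivAt f f' x)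
    (hf' : 0 < f') : ∀ᶠ y in 𝓝[<] x, f y < f x := by
  have hslope := (hasDerivAt_iff_tendsto_slope.mp hf).eventually (eventually_gt_nhds hf')
  filter_upwards [nhdsLT_le_nhdsNE x hslope, self_mem_nhdsWithin] with y hy hyx
  exact (slope_pos_iff_gt hyx).mp hy

lemma exists_mem_Ioo_rpow_eq_mul_add_one_sub {p q : ℝ} (hq : 0 < q) (hqp : q < p) (hp : p < 1) :
    ∃ u ∈ Ioo (0 : ℝ) 1, u ^ q = p * u + (1 - p) := by
  set g : ℝ → ℝ := fun u => p * u + (1 - p) - u ^ q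
  have hg_one : g 1 = 0 := by simp [g]
  have hg_zero : g 0 = 1 - p := by simp [g, Real.zero_rpow hq.ne']
  have hg_deriv : HasDerivAt g (p - q) 1 := by
    have hline : HasDerivAt (fun u : ℝ => p * u + (1 - p)) p 1 := by
      simpa using ((hasDerivAt_id (1 : ℝ)).const_mul p).add_const (1 - p)
    have hpow : HasDerivAt (fun u : ℝ => u ^ q) q 1 := by
      simpa using Real.hasDerivAt_rpow_const (x := 1) (p := q) (Or.inl one_ne_zero)
    exact hline.sub hpow
  obtain ⟨u₀, hgu₀, hu₀⟩ := ((hg_deriv.eventually_nhdsLT_lt (by linarith)).and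
    (Ioo_mem_nhdsLT zero_lt_one)).exists
  have hg_cont : ContinuousOn g (Icc 0 u₀) :=
    (((continuous_const.mul continuous_id).add continuous_const).sub
      (continuous_id.rpow_const fun _ => Or.inr hq.le)).continuousOn
  obtain ⟨u, hu, hgu⟩ := intermediate_value_Ioo' hu₀.1.le hg_cont
    ⟨hg_one ▸ hgu₀, hg_zero ▸ sub_pos.mpr hp⟩
  exact ⟨u, ⟨hu.1, hu.2.trans hu₀.2⟩, by linarith [show g u = 0 from hgu]⟩

lemma mul_rpow_one_sub_add_mul_rpow_neg_eq_one_iff {p q u : ℝ} (hu : 0 < u) :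
    p * u ^ (1 - q) + (1 - p) * u ^ (-q) = 1 ↔ u ^ q = p * u + (1 - p) := by
  have huq : 0 < u ^ q := Real.rpow_pos_of_pos hu q
  rw [Real.rpow_sub hu, Real.rpow_neg hu.le, Real.rpow_one]
  field_simp
  exact eq_comm

theorem stmt_1_general (c p q : ℝ) (hc : 0 < c)
    (hp : p ∈ Set.Ioo c (1 - c)) (hq : q ∈ Set.Ioo 0 p) :
    ∃ u ∈ Set.Ioo (0:ℝ) 1, p * u ^ (1 - q) + (1 - p) * u ^ (-q) = 1 := by
  obtain ⟨u, hu, hroot⟩ := exists_mem_Ioo_rpow_eq_mul_add_one_sub hq.1 hq.2 (by linarith [hp.2])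
  exact ⟨u, hu, (mul_rpow_one_sub_add_mul_rpow_neg_eq_one_iff hu.1).mpr hroot⟩

theorem stmt_1 (c p q : ℝ) (hc : 0 < c) (hc' : c < 1/2)
    (hp : p ∈ Set.Ioo c (1 - c)) (hq : q ∈ Set.Ioo 0 p) :
    ∃ u ∈ Set.Ioo (0:ℝ) 1, p * u ^ (1 - q) + (1 - p) * u ^ (-q) = 1 :=
  stmt_1_general c p q hc hp hq
end

section
/- For any p ∈ (0,1) and ε ∈ (0, p), setting q = p − ε we have ((1−p)q/(p(1−q)))^{1−q} ≤ 1 − (p − q). Equivalently, ln((1−p)(p−ε)/((1−p+ε)p)) ≤ ln(1−ε)/(1−p+ε). -/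
/-! Writing `q = p - ε` and `x = (1 - p) q / (p (1 - q))`, one has `x - 1 = -(p - q) / (p (1 - q))`.
Concavity of `t ↦ t ^ (1 - q)` (weighted AM–GM against `1`) gives
`x ^ (1 - q) ≤ (1 - q) x + q = 1 - (p - q) / p ≤ 1 - (p - q)`; the logarithmic form follows by
taking logarithms. -/

namespace Real

lemma log_le_log_div_of_rpow_le {x y r : ℝ} (hx : 0 < x) (hr : 0 < r) (h : x ^ r ≤ y) :
    log x ≤ log y / r := by
  rw [le_div_iff₀ hr, mul_comm, ← log_rpow hx]
  exact log_le_log (rpow_pos_of_pos hx r) h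

lemma rpow_le_mul_add_one_sub {x r : ℝ} (hx : 0 ≤ x) (hr₀ : 0 ≤ r) (hr₁ : r ≤ 1) :
    x ^ r ≤ r * x + (1 - r) := by
  simpa using geom_mean_le_arith_mean2_weighted hr₀ (sub_nonneg.2 hr₁) hx zero_le_one
    (add_sub_cancel r 1)

end Real

lemma odds_ratio_rpow_le {p q : ℝ} (hp₀ : 0 < p) (hp₁ : p ≤ 1) (hq₀ : 0 ≤ q) (hqp : q ≤ p)
    (hq₁ : q < 1) :
    ((1 - p) * q / (p * (1 - q))) ^ (1 - q) ≤ 1 - (p - q) := by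
  have hq₁' : 0 < 1 - q := sub_pos.2 hq₁
  have hx : 0 ≤ (1 - p) * q / (p * (1 - q)) := by
    have := sub_nonneg.2 hp₁
    positivity
  have hshrink : p - q ≤ (p - q) / p := le_div_self (sub_nonneg.2 hqp) hp₀ hp₁
  calc ((1 - p) * q / (p * (1 - q))) ^ (1 - q)
      ≤ (1 - q) * ((1 - p) * q / (p * (1 - q))) + (1 - (1 - q)) :=
        Real.rpow_le_mul_add_one_sub hx hq₁'.le (by linarith)
    _ = 1 - (p - q) / p := by field_simp; ring
    _ ≤ 1 - (p - q) := by linarith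

theorem stmt_3 (p ε : ℝ) (hp : p ∈ Set.Ioo (0:ℝ) 1) (hε : ε ∈ Set.Ioo 0 p) :
    (((1 - p) * (p - ε)) / (p * (1 - (p - ε)))) ^ (1 - (p - ε)) ≤ 1 - ε ∧
    Real.log (((1 - p) * (p - ε)) / ((1 - p + ε) * p)) ≤
      Real.log (1 - ε) / (1 - p + ε) := by
  obtain ⟨hp₀, hp₁⟩ := hp
  obtain ⟨hε₀, hεp⟩ := hε
  have hbound := odds_ratio_rpow_le hp₀ hp₁.le (by linarith) (by linarith) (by linarith : p - ε < 1)
  rw [sub_sub_cancel] at hbound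
  refine ⟨hbound, ?_⟩
  have hden : (1 - p + ε) * p = p * (1 - (p - ε)) := by ring
  have hexp : 1 - p + ε = 1 - (p - ε) := by ring
  rw [hden, hexp]
  have hx : 0 < (1 - p) * (p - ε) / (p * (1 - (p - ε))) :=
    div_pos (mul_pos (by linarith) (by linarith)) (mul_pos hp₀ (by linarith))
  exact Real.log_le_log_div_of_rpow_le hx (by linarith) hbound
end

section
/- Let 0 < c < 1/2 and p ∈ (c, 1−c), q ∈ (0, p), and let u ∈ (0,1) satisfy p·u^{1−q} + (1−p)·u^{−q} = 1. Then p(1 − u^{1−q}) ≥ c(p − q). -/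
/-!
Multiplying the equation by `u ^ q` turns it into `u ^ q = p * u + (1 - p)`: `u` is a root, other
than `1`, of the strictly concave function `x ↦ x ^ q - p * x - (1 - p)`. This function is
nonnegative at the minimiser `x₀` of `x ↦ p * x ^ (1 - q) + (1 - p) * x ^ (-q)` (a two-point
Gibbs inequality), so strict concavity forces `u ≤ x₀`. Bernoulli's inequality then gives
`u ^ (1 - q) ≤ x₀ ^ (1 - q) ≤ q / p`, hence `p * (1 - u ^ (1 - q)) ≥ p - q ≥ c * (p - q)`.
-/

open Real Set

/-- The minimiser of `x ↦ p * x ^ (1 - q) + (1 - p) * x ^ (-q)` on `(0, ∞)`. -/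
noncomputable def criticalPoint (p q : ℝ) : ℝ := (1 - p) * q / (p * (1 - q))

lemma rpow_div_mul_rpow_div_le_one {p q : ℝ} (hp₀ : 0 ≤ p) (hp₁ : p ≤ 1) (hq₀ : 0 < q)
    (hq₁ : q < 1) : (p / q) ^ q * ((1 - p) / (1 - q)) ^ (1 - q) ≤ 1 :=
  calc (p / q) ^ q * ((1 - p) / (1 - q)) ^ (1 - q)
      ≤ q * (p / q) + (1 - q) * ((1 - p) / (1 - q)) :=
        geom_mean_le_arith_mean2_weighted hq₀.le (by linarith) (by positivity)
          (div_nonneg (by linarith) (by linarith)) (by ring)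
    _ = 1 := by field_simp [(sub_pos.2 hq₁).ne']; ring

lemma affine_lt_of_strictConcaveOn {s : Set ℝ} {f : ℝ → ℝ} (hf : StrictConcaveOn ℝ s f)
    (a b : ℝ) {x y z : ℝ} (hx : x ∈ s) (hy : y ∈ s) (hxy : x ≠ y) (hfx : a * x + b ≤ f x)
    (hfy : a * y + b ≤ f y) (hz : z ∈ openSegment ℝ x y) : a * z + b < f z := by
  obtain ⟨α, β, hα, hβ, hαβ, rfl⟩ := hz
  have hlt := hf.2 hx hy hxy hα hβ hαβ
  simp only [smul_eq_mul] at hlt ⊢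
  have hsplit : a * (α * x + β * y) + b = α * (a * x + b) + β * (a * y + b) := by
    linear_combination b * hαβ.symm
  linarith [mul_le_mul_of_nonneg_left hfx hα.le, mul_le_mul_of_nonneg_left hfy hβ.le]

lemma rpow_eq_mul_add_of_mul_rpow_add_mul_rpow_eq_one {p q u : ℝ} (hu : 0 < u)
    (h : p * u ^ (1 - q) + (1 - p) * u ^ (-q) = 1) : u ^ q = p * u + (1 - p) := by
  rw [rpow_sub hu, rpow_one, rpow_neg hu.le] at h
  have : u ^ q ≠ 0 := (rpow_pos_of_pos hu q).ne'
  field_simp at h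
  linarith

section criticalPoint

variable {p q : ℝ}

lemma criticalPoint_nonneg (hp₀ : 0 < p) (hp₁ : p ≤ 1) (hq₀ : 0 ≤ q) (hq₁ : q < 1) :
    0 ≤ criticalPoint p q :=
  div_nonneg (mul_nonneg (by linarith) hq₀) (mul_nonneg hp₀.le (by linarith))

lemma mul_criticalPoint_add (hp : p ≠ 0) (hq : q ≠ 1) :
    p * criticalPoint p q + (1 - p) = (1 - p) / (1 - q) := by
  have : 1 - q ≠ 0 := sub_ne_zero.2 hq.symm
  unfold criticalPoint
  field_simp
  ring

lemma mul_criticalPoint_add_le_rpow (hp₀ : 0 < p) (hp₁ : p < 1) (hq₀ : 0 < q) (hq₁ : q < 1) :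
    p * criticalPoint p q + (1 - p) ≤ criticalPoint p q ^ q := by
  set A := p / q
  set B := (1 - p) / (1 - q)
  have hA : 0 < A := by positivity
  have hB : 0 < B := div_pos (by linarith) (by linarith)
  have hx₀ : criticalPoint p q = B / A := by
    unfold criticalPoint A B
    field_simp [(sub_pos.2 hq₁).ne']
  have hgibbs : A ^ q * B ^ (1 - q) ≤ 1 := rpow_div_mul_rpow_div_le_one hp₀.le hp₁.le hq₀ hq₁
  rw [mul_criticalPoint_add hp₀.ne' hq₁.ne, hx₀, div_rpow hB.le hA.le, le_div_iff₀ (by positivity)]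
  calc B * A ^ q = A ^ q * B ^ (1 - q) * B ^ q := by
        rw [mul_assoc, ← rpow_add hB, sub_add_cancel, rpow_one, mul_comm]
    _ ≤ B ^ q := mul_le_of_le_one_left (by positivity) hgibbs

lemma le_criticalPoint {u : ℝ} (hp₀ : 0 < p) (hp₁ : p < 1) (hq₀ : 0 < q) (hq₁ : q < 1)
    (hu₁ : u < 1) (hu : u ^ q = p * u + (1 - p)) : u ≤ criticalPoint p q := by
  by_contra! hlt
  have hx₀ := criticalPoint_nonneg hp₀ hp₁.le hq₀.le hq₁
  have hseg : u ∈ openSegment ℝ (criticalPoint p q) 1 := by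
    rw [openSegment_eq_Ioo (hlt.trans hu₁)]
    exact ⟨hlt, hu₁⟩
  have := affine_lt_of_strictConcaveOn (strictConcaveOn_rpow hq₀ hq₁) p (1 - p)
    (mem_Ici.2 hx₀) (mem_Ici.2 zero_le_one) (hlt.trans hu₁).ne
    (mul_criticalPoint_add_le_rpow hp₀ hp₁ hq₀ hq₁) (by simp) hseg
  linarith

lemma criticalPoint_rpow_one_sub_le (hp₀ : 0 < p) (hp₁ : p ≤ 1) (hq₀ : 0 ≤ q) (hq₁ : q < 1) :
    criticalPoint p q ^ (1 - q) ≤ q / p := by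
  have hx₀ := criticalPoint_nonneg hp₀ hp₁ hq₀ hq₁
  calc criticalPoint p q ^ (1 - q) = (1 + (criticalPoint p q - 1)) ^ (1 - q) := by ring_nf
    _ ≤ 1 + (1 - q) * (criticalPoint p q - 1) :=
        rpow_one_add_le_one_add_mul_self (by linarith) (by linarith) (by linarith)
    _ = q / p := by
        unfold criticalPoint
        field_simp [(sub_pos.2 hq₁).ne']
        ring

end criticalPoint

theorem stmt_4 (c p q u : ℝ) (hc : 0 < c) (hc' : c < 1/2)
    (hp : p ∈ Set.Ioo c (1 - c)) (hq : q ∈ Set.Ioo 0 p)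
    (hu : u ∈ Set.Ioo (0:ℝ) 1)
    (heq : p * u ^ (1 - q) + (1 - p) * u ^ (-q) = 1) :
    c * (p - q) ≤ p * (1 - u ^ (1 - q)) := by
  obtain ⟨hq₀, hqp⟩ := hq
  obtain ⟨hu₀, hu₁⟩ := hu
  have hp₀ : 0 < p := hq₀.trans hqp
  have hp₁ : p < 1 := by linarith [hp.2]
  have hu_le : u ≤ criticalPoint p q :=
    le_criticalPoint hp₀ hp₁ hq₀ (hqp.trans hp₁) hu₁
      (rpow_eq_mul_add_of_mul_rpow_add_mul_rpow_eq_one hu₀ heq)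
  have hbound : u ^ (1 - q) ≤ q / p :=
    (rpow_le_rpow hu₀.le hu_le (by linarith)).trans
      (criticalPoint_rpow_one_sub_le hp₀ hp₁.le hq₀.le (hqp.trans hp₁))
  calc c * (p - q) ≤ p - q := by nlinarith
    _ = p * (1 - q / p) := by field_simp
    _ ≤ p * (1 - u ^ (1 - q)) := by gcongr
end

section
/- Let (X_i)_{i≥1} be i.i.d. Bernoulli(p) random variables with p ∈ (c, 1−c) for some constant c ∈ (0, 1/2), and let q ∈ (0, p). Then the probability that for all n ≥ 1 the average (1/n)·Σ_{i=1}^n X_i is at least q is at least c·(p − q). -/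
/-!
Put `a = 1 - (p - q)` and tilt each step by `φ x = a ^ ((x - q) / (1 - q))`, so that `φ 1 = a`
and `p φ(1) + (1 - p) φ(0) ≤ 1`. Since `∏ φ(xᵢ) = a ^ (∑ (xᵢ - q) / (1 - q))`, the product of the
tilts of `X₁, …, Xₙ` is at least `1` as soon as the running mean drops below `q`. Restricting the
first factor to `{X₁ = 1}` turns the products into a nonnegative supermartingale of initial mean
`p a`, so by Ville's inequality the event that `X₁ = 1` and the running mean later drops below `q`
has probability at most `p a`. Hence the mean stays at least `q` with probability at least
`p - p a = p (p - q) ≥ c (p - q)`.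
-/

open MeasureTheory ProbabilityTheory Finset

section Tilt

open Real

theorem tilt_mean_le_one {p q : ℝ} (hq : 0 < q) (hqp : q < p) (hp : p ≤ 1) :
    p * (1 - (p - q)) + (1 - p) * (1 - (p - q)) ^ (-q / (1 - q)) ≤ 1 := by
  set a := 1 - (p - q)
  set s := q / (1 - q)
  have hq1 : 0 < 1 - q := by linarith
  have ha : 0 < a := by linarith
  have hlower : 1 + s * (1 - a⁻¹) ≤ a ^ s := calc
    1 + s * (1 - a⁻¹) ≤ 1 + s * log a := by
      gcongr
      exact one_sub_inv_le_log_of_pos ha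
    _ ≤ a ^ s := by rw [rpow_def_of_pos ha, mul_comm, add_comm]; exact add_one_le_exp _
  have hpoly : 1 - p ≤ (1 - p * a) * (1 + s * (1 - a⁻¹)) := by
    have hgap : (1 - p * a) * (1 + s * (1 - a⁻¹)) - (1 - p) =
        (p - q) ^ 2 * (1 - p) / (a * (1 - q)) := by
      have := ha.ne'
      simp only [s]
      field_simp
      simp only [a]
      ring
    have : 0 ≤ (p - q) ^ 2 * (1 - p) / (a * (1 - q)) := by positivity
    linarith
  have hmain : (1 - p) * (a ^ s)⁻¹ ≤ 1 - p * a := by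
    rw [← div_eq_mul_inv, div_le_iff₀ (rpow_pos_of_pos ha s)]
    exact hpoly.trans (mul_le_mul_of_nonneg_left hlower (by nlinarith))
  rw [neg_div, rpow_neg ha.le]
  linarith

theorem exists_one_le_prod_rpow_of_exists_div_lt {a q : ℝ} (ha0 : 0 < a) (ha1 : a ≤ 1)
    (hq : q < 1) {x : ℕ → ℝ} (h : ∃ n : ℕ, 1 ≤ n ∧ (∑ i ∈ range n, x i) / n < q) :
    ∃ k, 1 ≤ ∏ i ∈ range (k + 1), a ^ ((x i - q) / (1 - q)) := by
  obtain ⟨n, hn, hlt⟩ := h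
  obtain ⟨k, rfl⟩ : ∃ k, n = k + 1 := ⟨n - 1, by omega⟩
  refine ⟨k, ?_⟩
  rw [← rpow_sum_of_pos ha0, ← sum_div]
  refine one_le_rpow_of_pos_of_le_one_of_nonpos ha0 ha1
    (div_nonpos_of_nonpos_of_nonneg ?_ (by linarith))
  rw [div_lt_iff₀ (by positivity)] at hlt
  simp only [sum_sub_distrib, sum_const, card_range, nsmul_eq_mul]
  linarith

end Tilt

namespace MeasureTheory

variable {Ω : Type*} {m0 : MeasurableSpace Ω} {μ : Measure Ω}

section Ville

variable [IsFiniteMeasure μ] {𝒢 : Filtration ℕ m0} {f : ℕ → Ω → ℝ}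

/-- Optional stopping at the first time `f` reaches `c`, capped at `n`. -/
theorem Supermartingale.mul_measureReal_exists_le_le (hf : Supermartingale f 𝒢 μ)
    (hnonneg : 0 ≤ f) (c : ℝ) (n : ℕ) :
    c * μ.real {ω | ∃ k ≤ n, c ≤ f k ω} ≤ μ[f 0] := by
  set τ : Ω → ℕ := hittingBtwn f (Set.Ici c) 0 n
  set fτ : Ω → ℝ := stoppedValue f fun ω ↦ (τ ω : WithTop ℕ)
  have hτ : IsStoppingTime 𝒢 fun ω ↦ (τ ω : WithTop ℕ) :=
    hf.stronglyAdapted.adapted.isStoppingTime_hittingBtwn measurableSet_Ici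
  have hτn (ω : Ω) : (τ ω : WithTop ℕ) ≤ n := WithTop.coe_le_coe.2 (hittingBtwn_le ω)
  have hstop : μ[fτ] ≤ μ[f 0] := by
    have := hf.neg.expected_stoppedValue_mono (isStoppingTime_const 𝒢 0) hτ
      (fun ω => WithTop.coe_le_coe.2 (Nat.zero_le _)) hτn
    simpa [stoppedValue, integral_neg, fτ] using this
  have hmeas : MeasurableSet {ω | ∃ k ≤ n, c ≤ f k ω} := by
    have hfm (k : ℕ) : Measurable (f k) := ((hf.stronglyAdapted k).mono (𝒢.le k)).measurable
    measurability
  have hge : {ω | ∃ k ≤ n, c ≤ f k ω}.indicator (fun _ => c) ≤ fτ := by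
    intro ω
    by_cases hω : ∃ k ≤ n, c ≤ f k ω
    · rw [Set.indicator_of_mem (s := {ω | ∃ k ≤ n, c ≤ f k ω}) hω]
      exact stoppedValue_hittingBtwn_mem (s := Set.Ici c) (by simpa using hω)
    · rw [Set.indicator_of_notMem (s := {ω | ∃ k ≤ n, c ≤ f k ω}) hω]
      exact hnonneg _ _
  calc c * μ.real {ω | ∃ k ≤ n, c ≤ f k ω}
      = ∫ ω, {ω | ∃ k ≤ n, c ≤ f k ω}.indicator (fun _ => c) ω ∂μ := by
        rw [integral_indicator_const _ hmeas, smul_eq_mul, mul_comm]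
    _ ≤ μ[fτ] := integral_mono ((integrable_const c).indicator hmeas)
        (integrable_stoppedValue ℕ hτ hf.integrable hτn) hge
    _ ≤ μ[f 0] := hstop

/-- **Ville's inequality**. -/
theorem Supermartingale.measure_exists_le_le (hf : Supermartingale f 𝒢 μ) (hnonneg : 0 ≤ f)
    {c : ℝ} (hc : 0 < c) :
    μ {ω | ∃ k, c ≤ f k ω} ≤ ENNReal.ofReal (μ[f 0] / c) := by
  have hunion : {ω | ∃ k, c ≤ f k ω} = ⋃ n, {ω | ∃ k ≤ n, c ≤ f k ω} := by
    ext ω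
    simp only [Set.mem_ofPred_eq, Set.mem_iUnion]
    exact ⟨fun ⟨k, hk⟩ => ⟨k, k, le_rfl, hk⟩, fun ⟨_, k, _, hk⟩ => ⟨k, hk⟩⟩
  have hmono : Monotone fun n => {ω | ∃ k ≤ n, c ≤ f k ω} :=
    fun n m hnm ω ⟨k, hk, hck⟩ => ⟨k, hk.trans hnm, hck⟩
  rw [hunion, hmono.measure_iUnion]
  refine iSup_le fun n => ?_
  rw [← ofReal_measureReal]
  exact ENNReal.ofReal_le_ofReal ((le_div_iff₀' hc).2 (hf.mul_measureReal_exists_le_le hnonneg c n))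

end Ville

section ZeroOne

variable {X : Ω → ℝ}

theorem comp_ae_eq_of_ae_eq_zero_or_one (h01 : ∀ᵐ ω ∂μ, X ω = 0 ∨ X ω = 1) (g : ℝ → ℝ) :
    (fun ω => g (X ω)) =ᵐ[μ] fun ω => g 0 + {ω | X ω = 1}.indicator (fun _ => g 1 - g 0) ω := by
  filter_upwards [h01] with ω hω
  rcases hω with hω | hω <;> simp [Set.indicator, hω]

variable [IsProbabilityMeasure μ]

theorem integrable_comp_of_ae_eq_zero_or_one (hX : Measurable X)
    (h01 : ∀ᵐ ω ∂μ, X ω = 0 ∨ X ω = 1) (g : ℝ → ℝ) : Integrable (fun ω => g (X ω)) μ :=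
  ((integrable_const _).add ((integrable_const _).indicator (hX (measurableSet_singleton 1)))).congr
    (comp_ae_eq_of_ae_eq_zero_or_one h01 g).symm

theorem integral_comp_of_ae_eq_zero_or_one (hX : Measurable X)
    (h01 : ∀ᵐ ω ∂μ, X ω = 0 ∨ X ω = 1) (g : ℝ → ℝ) :
    ∫ ω, g (X ω) ∂μ = μ.real {ω | X ω = 1} * g 1 + (1 - μ.real {ω | X ω = 1}) * g 0 := by
  have hS : MeasurableSet {ω | X ω = 1} := hX (measurableSet_singleton 1)
  rw [integral_congr_ae (comp_ae_eq_of_ae_eq_zero_or_one h01 g),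
    integral_add (integrable_const _) ((integrable_const _).indicator hS),
    integral_const, integral_indicator_const _ hS]
  simp only [probReal_univ, smul_eq_mul]
  ring

end ZeroOne

end MeasureTheory

namespace ProbabilityTheory

variable {Ω : Type*} {m0 : MeasurableSpace Ω} {μ : Measure Ω}

theorem iIndepFun.supermartingale_prod_range {Y : ℕ → Ω → ℝ}
    (hY : ∀ i, StronglyMeasurable (Y i)) (hind : iIndepFun Y μ) (hnonneg : 0 ≤ Y)
    (hint : ∀ i, Integrable (Y i) μ) (hmean : ∀ i, μ[Y (i + 1)] ≤ 1) :
    Supermartingale (fun n => ∏ i ∈ range (n + 1), Y i) (Filtration.natural Y hY) μ := by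
  have := hind.isProbabilityMeasure
  set ℱ := Filtration.natural Y hY
  have hadapted : StronglyAdapted ℱ fun n => ∏ i ∈ range (n + 1), Y i := fun n =>
    Finset.stronglyMeasurable_prod _ fun i hi =>
      (Filtration.stronglyAdapted_natural hY i).mono
        (ℱ.mono (Nat.lt_succ_iff.1 (Finset.mem_range.1 hi)))
  have hindep_next (n : ℕ) : IndepFun (∏ i ∈ range (n + 1), Y i) (Y (n + 1)) μ :=
    hind.indepFun_finsetProd_of_notMem (fun i => (hY i).measurable) (by simp)
  have hintegrable (n : ℕ) : Integrable (∏ i ∈ range (n + 1), Y i) μ := by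
    induction n with
    | zero => simpa using hint 0
    | succ n ih =>
      rw [prod_range_succ]
      exact (hindep_next n).integrable_mul ih (hint _)
  refine supermartingale_nat hadapted hintegrable fun n => ?_
  rw [prod_range_succ]
  filter_upwards [condExp_mul_of_stronglyMeasurable_left (hadapted n)
      ((hindep_next n).integrable_mul (hintegrable n) (hint _)) (hint _),
    hind.condExp_natural_ae_eq_of_lt hY (Nat.lt_succ_self n)] with ω hmul hconst
  rw [hmul, Pi.mul_apply, hconst, prod_apply]
  exact mul_le_of_le_one_right (prod_nonneg fun i _ => hnonneg i ω) (hmean n)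

theorem iIndepFun.measure_exists_le_mul_prod_le {X : ℕ → Ω → ℝ}
    (hindep : iIndepFun X μ) (hmeas : ∀ i, Measurable (X i))
    (h01 : ∀ i, ∀ᵐ ω ∂μ, X i ω = 0 ∨ X i ω = 1) {p : ℝ} (hp : ∀ i, μ.real {ω | X i ω = 1} = p)
    {g₀ g : ℝ → ℝ} (hg₀ : Measurable g₀) (hg : Measurable g) (hg₀_nonneg : 0 ≤ g₀)
    (hg_nonneg : 0 ≤ g) (hmean : p * g 1 + (1 - p) * g 0 ≤ 1) {c : ℝ} (hc : 0 < c) :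
    μ {ω | ∃ k, c ≤ g₀ (X 0 ω) * ∏ i ∈ range k, g (X (i + 1) ω)} ≤
      ENNReal.ofReal ((p * g₀ 1 + (1 - p) * g₀ 0) / c) := by
  have := hindep.isProbabilityMeasure
  set h : ℕ → ℝ → ℝ := fun i => if i = 0 then g₀ else g
  have hh (i : ℕ) : Measurable (h i) := by by_cases hi : i = 0 <;> simp [h, hi, hg₀, hg]
  have hh_nonneg (i : ℕ) : 0 ≤ h i := by
    by_cases hi : i = 0 <;> simp [h, hi, hg₀_nonneg, hg_nonneg]
  set Y : ℕ → Ω → ℝ := fun i => h i ∘ X i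
  have hY (i : ℕ) : Measurable (Y i) := (hh i).comp (hmeas i)
  have hmean_Y (i : ℕ) : μ[Y i] = p * h i 1 + (1 - p) * h i 0 := by
    rw [← hp i]
    exact integral_comp_of_ae_eq_zero_or_one (hmeas i) (h01 i) (h i)
  have hsuper := (hindep.comp h hh).supermartingale_prod_range (fun i => (hY i).stronglyMeasurable)
    (fun i ω => hh_nonneg i _) (fun i => integrable_comp_of_ae_eq_zero_or_one (hmeas i) (h01 i) _)
    (fun i => by simpa [hmean_Y, h] using hmean)
  have hville := hsuper.measure_exists_le_le
    (fun n ω => by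
      simp only [Pi.zero_apply, prod_apply]
      exact prod_nonneg fun i _ => hh_nonneg i _) hc
  simp only [prod_apply, prod_range_succ', zero_add, mul_comm _ (Y 0 _), range_one,
    prod_singleton, hmean_Y] at hville
  simpa [Y, h] using hville


theorem iIndepFun.measure_eq_one_and_exists_div_lt_le {X : ℕ → Ω → ℝ} (hindep : iIndepFun X μ)
    (hmeas : ∀ i, Measurable (X i)) (h01 : ∀ i, ∀ᵐ ω ∂μ, X i ω = 0 ∨ X i ω = 1) {p q : ℝ}
    (hp : ∀ i, μ.real {ω | X i ω = 1} = p) (hq : 0 < q) (hqp : q < p) (hp1 : p ≤ 1) :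
    μ {ω | X 0 ω = 1 ∧ ∃ n : ℕ, 1 ≤ n ∧ (∑ i ∈ range n, X i ω) / n < q} ≤
      ENNReal.ofReal (p * (1 - (p - q))) := by
  set a := 1 - (p - q)
  have ha0 : 0 < a := by linarith
  set φ : ℝ → ℝ := fun x => a ^ ((x - q) / (1 - q))
  have hφ1 : φ 1 = a := by simp [φ, div_self (by linarith : (1 : ℝ) - q ≠ 0)]
  set g₀ : ℝ → ℝ := ({1} : Set ℝ).indicator fun _ => a
  have hmean : p * φ 1 + (1 - p) * φ 0 ≤ 1 := by
    simpa [φ, hφ1, neg_div] using tilt_mean_le_one hq hqp hp1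
  have hville := hindep.measure_exists_le_mul_prod_le (g₀ := g₀) (g := φ) hmeas h01 hp
    (measurable_const.indicator (measurableSet_singleton 1)) (by fun_prop)
    (Set.indicator_nonneg fun _ _ => ha0.le) (fun x => (Real.rpow_pos_of_pos ha0 _).le)
    hmean one_pos
  have hg₀ : p * g₀ 1 + (1 - p) * g₀ 0 = p * a := by simp [g₀]
  rw [hg₀, div_one] at hville
  refine (measure_mono ?_).trans hville
  rintro ω ⟨hω, hlt⟩
  obtain ⟨k, hk⟩ := exists_one_le_prod_rpow_of_exists_div_lt ha0 (by linarith) (by linarith) hlt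
  have hg₀ω : g₀ (X 0 ω) = φ (X 0 ω) := by
    rw [hω, hφ1]
    exact Set.indicator_of_mem (Set.mem_singleton (1 : ℝ)) _
  rw [prod_range_succ', mul_comm] at hk
  exact ⟨k, hg₀ω ▸ hk⟩

end ProbabilityTheory

theorem stmt_5_general {Ω : Type*} {m : MeasurableSpace Ω} {P : Measure Ω}
    (c p q : ℝ) (hc : 0 < c)
    (hp : p ∈ Set.Ioo c (1 - c)) (hq : q ∈ Set.Ioo 0 p)
    (X : ℕ → Ω → ℝ) (hmeas : ∀ i, Measurable (X i))
    (hindep : iIndepFun X P)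
    (hbern01 : ∀ i, ∀ᵐ ω ∂P, X i ω = 0 ∨ X i ω = 1)
    (hbernp : ∀ i, P {ω | X i ω = 1} = ENNReal.ofReal p) :
    ENNReal.ofReal (c * (p - q)) ≤
      P {ω | ∀ n : ℕ, 1 ≤ n → q ≤ (∑ i ∈ Finset.range n, X (i + 1) ω) / n} := by
  obtain ⟨hcp, hpc⟩ := hp
  obtain ⟨hq0, hqp⟩ := hq
  have hshift : iIndepFun (fun i => X (i + 1)) P := hindep.precomp (add_left_injective 1)
  have hprob (i : ℕ) : P.real {ω | X (i + 1) ω = 1} = p := by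
    rw [measureReal_def, hbernp, ENNReal.toReal_ofReal (by linarith)]
  have hdip := hshift.measure_eq_one_and_exists_div_lt_le (fun i => hmeas _) (fun i => hbern01 _)
    hprob hq0 hqp (by linarith)
  set E := {ω | ∀ n : ℕ, 1 ≤ n → q ≤ (∑ i ∈ Finset.range n, X (i + 1) ω) / n}
  set D := {ω | X 1 ω = 1 ∧ ∃ n : ℕ, 1 ≤ n ∧ (∑ i ∈ range n, X (i + 1) ω) / n < q}
  have hsub : {ω | X 1 ω = 1} ⊆ E ∪ D := fun ω hω => by
    by_cases hE : ω ∈ E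
    · exact Or.inl hE
    · exact Or.inr ⟨hω, by simpa [E] using hE⟩
  calc ENNReal.ofReal (c * (p - q))
      ≤ ENNReal.ofReal p - ENNReal.ofReal (p * (1 - (p - q))) := by
        rw [← ENNReal.ofReal_sub _ (mul_nonneg (by linarith) (by linarith))]
        exact ENNReal.ofReal_le_ofReal (by nlinarith)
    _ ≤ P E := by
        rw [tsub_le_iff_right, ← hbernp 1]
        exact (measure_mono hsub).trans ((measure_union_le _ _).trans (by gcongr))

theorem stmt_5 {Ω : Type*} {m : MeasurableSpace Ω} {P : Measure Ω}
    [IsProbabilityMeasure P] (c p q : ℝ) (hc : 0 < c) (hc' : c < 1/2)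
    (hp : p ∈ Set.Ioo c (1 - c)) (hq : q ∈ Set.Ioo 0 p)
    (X : ℕ → Ω → ℝ) (hmeas : ∀ i, Measurable (X i))
    (hindep : iIndepFun X P)
    (hbern01 : ∀ i, ∀ᵐ ω ∂P, X i ω = 0 ∨ X i ω = 1)
    (hbernp : ∀ i, P {ω | X i ω = 1} = ENNReal.ofReal p) :
    ENNReal.ofReal (c * (p - q)) ≤
      P {ω | ∀ n : ℕ, 1 ≤ n → q ≤ (∑ i ∈ Finset.range n, X (i + 1) ω) / n} :=
  stmt_5_general (m := m) c p q hc hp hq X hmeas hindep hbern01 hbernp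
end

section
/- Let (X_i)_{i∈[n]} be i.i.d. random variables taking values in [0,1] with mean μ. Then for any x > 0, the probability that there exists i ∈ [n] with |Σ_{j=1}^{i}(X_j − μ)| > x is at most 2·exp(−2x²/n). -/
/-!
For `t ≥ 0` the process `exp (t * S k)` of partial sums of independent, mean-zero increments is a
nonnegative submartingale, since `𝔼[exp (t * Y)] ≥ 1 + t 𝔼[Y] = 1`. Doob's maximal inequality
bounds `P(max_{k ≤ n} S k > x)` by `exp (-t x) 𝔼[exp (t * S n)]`, and Hoeffding's lemma bounds
the latter by `exp (n (b - a)² t² / 8)` when the increments lie in `[a, b]`. The choice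
`t = 4x / (n (b - a)²)` gives `exp (-2x² / (n (b - a)²))`; the same bound for `-S` handles `|S k|`.
-/

open MeasureTheory ProbabilityTheory Real Finset

section

variable {Ω : Type*} {m : MeasurableSpace Ω} {P : Measure Ω}

lemma one_le_mgf_of_integral_eq_zero [IsProbabilityMeasure P] {X : Ω → ℝ} {t : ℝ}
    (hX : Integrable X P) (hexp : Integrable (fun ω ↦ exp (t * X ω)) P) (h0 : P[X] = 0) :
    1 ≤ mgf X P t :=
  calc 1 = ∫ ω, (t * X ω + 1) ∂P := by
        rw [integral_add (hX.const_mul t) (integrable_const 1), integral_const_mul, h0]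
        simp
    _ ≤ mgf X P t := integral_mono ((hX.const_mul t).add (integrable_const 1)) hexp
        fun ω ↦ add_one_le_exp _

lemma submartingale_exp_mul [IsFiniteMeasure P] {S : ℕ → Ω → ℝ} {𝒢 : Filtration ℕ m} {t : ℝ}
    (hS : StronglyAdapted 𝒢 S)
    (hindep : ∀ k, Indep (.comap (S (k + 1) - S k) inferInstance) (𝒢 k) P)
    (hint : ∀ k, Integrable (fun ω ↦ exp (t * S k ω)) P)
    (hone : ∀ k, 1 ≤ mgf (S (k + 1) - S k) P t) :
    Submartingale (fun k ω ↦ exp (t * S k ω)) 𝒢 P := by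
  refine submartingale_nat (fun k ↦ ?_) hint fun k ↦ ?_
  · exact continuous_exp.comp_stronglyMeasurable ((hS k).const_mul t)
  have hSm : ∀ k, Measurable (S k) := fun k ↦ ((hS k).mono (𝒢.le k)).measurable
  set D := S (k + 1) - S k
  -- `mgf` is `0` where `exp (t * D)` is not integrable.
  have hD : Integrable (fun ω ↦ exp (t * D ω)) P := by
    by_contra h
    linarith [hone k, mgf_undef h]
  have hsplit : (fun ω ↦ exp (t * S (k + 1) ω)) =
      (fun ω ↦ exp (t * S k ω)) * fun ω ↦ exp (t * D ω) := by
    ext ω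
    rw [Pi.mul_apply, ← exp_add, ← mul_add]
    simp only [D, Pi.sub_apply, add_sub_cancel]
  have hcond : P[fun ω ↦ exp (t * D ω) | 𝒢 k] =ᵐ[P] fun _ ↦ mgf D P t :=
    condExp_indep_eq ((hSm (k + 1)).sub (hSm k)).comap_le (𝒢.le k)
      (continuous_exp.comp_stronglyMeasurable
        ((comap_measurable D).stronglyMeasurable.const_mul t)) (hindep k)
  rw [hsplit]
  filter_upwards [condExp_mul_of_stronglyMeasurable_left
    (continuous_exp.comp_stronglyMeasurable ((hS k).const_mul t)) (hsplit ▸ hint (k + 1)) hD,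
    hcond] with ω h1 h2
  rw [h1, Pi.mul_apply, h2]
  exact le_mul_of_one_le_right (exp_pos _).le (hone k)

lemma submartingale_exp_mul_sum_range [IsFiniteMeasure P] {Y : ℕ → Ω → ℝ}
    (hY : ∀ j, Measurable (Y j)) (hindep : iIndepFun Y P) {t : ℝ}
    (hint : ∀ j, Integrable (fun ω ↦ exp (t * Y j ω)) P) (hone : ∀ j, 1 ≤ mgf (Y j) P t) :
    Submartingale (fun k ω ↦ exp (t * ∑ j ∈ range k, Y j ω))
      (Filtration.natural (fun k ω ↦ ∑ j ∈ range k, Y j ω)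
        fun _ ↦ (Finset.measurable_sum _ fun j _ ↦ hY j).stronglyMeasurable) P := by
  set 𝒢 := Filtration.natural (fun k ω ↦ ∑ j ∈ range k, Y j ω)
    fun _ ↦ (Finset.measurable_sum _ fun j _ ↦ hY j).stronglyMeasurable
  have hincr : ∀ k,
      ((fun ω ↦ ∑ j ∈ range (k + 1), Y j ω) - fun ω ↦ ∑ j ∈ range k, Y j ω) = Y k := by
    intro k; ext ω; simp [sum_range_succ]
  refine submartingale_exp_mul (Filtration.stronglyAdapted_natural _) (fun k ↦ ?_) (fun k ↦ ?_)
    (fun k ↦ hincr k ▸ hone k)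
  · rw [hincr]
    have hle : 𝒢 k ≤ ⨆ j ∈ Set.Iio k, MeasurableSpace.comap (Y j) inferInstance := by
      refine iSup₂_le fun i hi ↦ Measurable.comap_le ?_
      exact Finset.measurable_sum _ fun j hj ↦ Measurable.of_comap_le
        (le_iSup₂ (f := fun j (_ : j ∈ Set.Iio k) ↦ MeasurableSpace.comap (Y j) inferInstance) j
          (Set.mem_Iio.2 ((mem_range.1 hj).trans_le hi)))
    have hpast := indep_iSup_of_disjoint (fun j ↦ (hY j).comap_le)
      ((iIndepFun_iff_iIndep _ _ _).1 hindep) (S := {k}) (T := Set.Iio k) (by simp)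
    rw [_root_.iSup_singleton] at hpast
    exact indep_of_indep_of_le_right hpast hle
  · simpa only [Finset.sum_apply] using hindep.integrable_exp_mul_sum hY fun j _ ↦ hint j

lemma measure_exists_lt_le_of_submartingale_exp [IsFiniteMeasure P] {S : ℕ → Ω → ℝ}
    {𝒢 : Filtration ℕ m} {t : ℝ} (hsub : Submartingale (fun k ω ↦ exp (t * S k ω)) 𝒢 P)
    (ht : 0 ≤ t) (x : ℝ) (n : ℕ) :
    P {ω | ∃ k ≤ n, x < S k ω} ≤ ENNReal.ofReal (exp (-(t * x)) * mgf (S n) P t) := by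
  set ε := (exp (t * x)).toNNReal
  set M := {ω | (ε : ℝ) ≤ (range (n + 1)).sup' nonempty_range_add_one fun k ↦ exp (t * S k ω)}
  have hsubset : {ω | ∃ k ≤ n, x < S k ω} ⊆ M := by
    rintro ω ⟨k, hk, hxk⟩
    refine le_sup'_of_le (fun k ↦ exp (t * S k ω)) (mem_range.2 (Nat.lt_succ_of_le hk)) ?_
    rw [Real.coe_toNNReal _ (exp_pos _).le]
    gcongr
  have hmax := maximal_ineq hsub (fun k ω ↦ (exp_pos _).le) (ε := ε) n
  have hset : ∫ ω in M, exp (t * S n ω) ∂P ≤ mgf (S n) P t :=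
    setIntegral_le_integral (hsub.integrable n) (ae_of_all _ fun ω ↦ (exp_pos _).le)
  calc P {ω | ∃ k ≤ n, x < S k ω} ≤ P M := measure_mono hsubset
    _ = ENNReal.ofReal (exp (-(t * x))) * (ε * P M) := by
      rw [← mul_assoc, ENNReal.ofNNReal_toNNReal, ← ENNReal.ofReal_mul (exp_pos _).le,
        ← exp_add, neg_add_cancel, exp_zero, ENNReal.ofReal_one, one_mul]
    _ ≤ ENNReal.ofReal (exp (-(t * x))) * ENNReal.ofReal (mgf (S n) P t) := by
      gcongr
      exact hmax.trans (ENNReal.ofReal_le_ofReal hset)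
    _ = ENNReal.ofReal (exp (-(t * x)) * mgf (S n) P t) :=
      (ENNReal.ofReal_mul (exp_pos _).le).symm

lemma mgf_sum_range_le_of_mem_Icc [IsProbabilityMeasure P] {Y : ℕ → Ω → ℝ}
    (hY : ∀ j, Measurable (Y j)) (hindep : iIndepFun Y P) {a b : ℝ}
    (hbdd : ∀ j, ∀ᵐ ω ∂P, Y j ω ∈ Set.Icc a b) (hmean : ∀ j, P[Y j] = 0) (n : ℕ) (t : ℝ) :
    mgf (fun ω ↦ ∑ j ∈ range n, Y j ω) P t ≤ exp (n * (b - a) ^ 2 * t ^ 2 / 8) := by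
  have := (HasSubgaussianMGF.sum_of_iIndepFun hindep (s := range n) fun j _ ↦
    hasSubgaussianMGF_of_mem_Icc_of_integral_eq_zero (hY j).aemeasurable (hbdd j)
      (hmean j)).mgf_le t
  convert this using 2
  simp only [sum_const, card_range, nsmul_eq_mul, NNReal.coe_mul, NNReal.coe_natCast,
    NNReal.coe_pow, NNReal.coe_div, coe_nnnorm, Real.norm_eq_abs]
  push_cast
  rw [div_pow, sq_abs]
  ring

lemma measure_exists_lt_sum_range_le_of_mem_Icc [IsProbabilityMeasure P] {Y : ℕ → Ω → ℝ}
    (hY : ∀ j, Measurable (Y j)) (hindep : iIndepFun Y P) {a b : ℝ}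
    (hbdd : ∀ j, ∀ᵐ ω ∂P, Y j ω ∈ Set.Icc a b) (hmean : ∀ j, P[Y j] = 0) {x : ℝ} (hx : 0 ≤ x)
    (n : ℕ) :
    P {ω | ∃ k ≤ n, x < ∑ j ∈ range k, Y j ω} ≤
      ENNReal.ofReal (exp (-2 * x ^ 2 / (n * (b - a) ^ 2))) := by
  set D : ℝ := n * (b - a) ^ 2
  set t := 4 * x / D
  have hsub := submartingale_exp_mul_sum_range hY hindep (t := t)
    (fun j ↦ integrable_exp_mul_of_mem_Icc (hY j).aemeasurable (hbdd j))
    fun j ↦ one_le_mgf_of_integral_eq_zero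
      (Integrable.of_mem_Icc a b (hY j).aemeasurable (hbdd j))
      (integrable_exp_mul_of_mem_Icc (hY j).aemeasurable (hbdd j)) (hmean j)
  refine (measure_exists_lt_le_of_submartingale_exp hsub (by positivity) x n).trans
    (ENNReal.ofReal_le_ofReal ?_)
  calc exp (-(t * x)) * mgf (fun ω ↦ ∑ j ∈ range n, Y j ω) P t
      ≤ exp (-(t * x)) * exp (D * t ^ 2 / 8) := by
        gcongr
        exact mgf_sum_range_le_of_mem_Icc hY hindep hbdd hmean n t
    _ = exp (-2 * x ^ 2 / D) := by
        rw [← exp_add]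
        congr 1
        -- For `D = 0` both sides vanish: `t = 4 * x / 0 = 0` and `-2 * x ^ 2 / 0 = 0`.
        rcases eq_or_ne D 0 with hD | hD
        · simp [t, hD]
        · simp only [t]
          field_simp
          ring

lemma measure_exists_lt_abs_sum_range_le_of_mem_Icc [IsProbabilityMeasure P] {Y : ℕ → Ω → ℝ}
    (hY : ∀ j, Measurable (Y j)) (hindep : iIndepFun Y P) {a b : ℝ}
    (hbdd : ∀ j, ∀ᵐ ω ∂P, Y j ω ∈ Set.Icc a b) (hmean : ∀ j, P[Y j] = 0) {x : ℝ} (hx : 0 ≤ x)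
    (n : ℕ) :
    P {ω | ∃ k ≤ n, x < |∑ j ∈ range k, Y j ω|} ≤
      ENNReal.ofReal (2 * exp (-2 * x ^ 2 / (n * (b - a) ^ 2))) := by
  have hupper := measure_exists_lt_sum_range_le_of_mem_Icc hY hindep hbdd hmean hx n
  have hlower := measure_exists_lt_sum_range_le_of_mem_Icc (Y := fun j ω ↦ -Y j ω)
    (fun j ↦ (hY j).neg) (hindep.comp (fun _ y ↦ -y) fun _ ↦ measurable_neg)
    (fun j ↦ by filter_upwards [hbdd j] with ω hω using ⟨neg_le_neg hω.2, neg_le_neg hω.1⟩)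
    (fun j ↦ by rw [integral_neg, hmean j, neg_zero]) hx n
  rw [neg_sub_neg] at hlower
  have hsubset : {ω | ∃ k ≤ n, x < |∑ j ∈ range k, Y j ω|} ⊆
      {ω | ∃ k ≤ n, x < ∑ j ∈ range k, Y j ω} ∪ {ω | ∃ k ≤ n, x < ∑ j ∈ range k, -Y j ω} := by
    rintro ω ⟨k, hk, hxk⟩
    rcases lt_abs.1 hxk with h | h
    · exact Or.inl ⟨k, hk, h⟩
    · exact Or.inr ⟨k, hk, by rwa [sum_neg_distrib]⟩
  calc _ ≤ _ := measure_mono hsubset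
    _ ≤ _ := measure_union_le _ _
    _ ≤ _ := add_le_add hupper hlower
    _ = _ := by rw [← ENNReal.ofReal_add (exp_pos _).le (exp_pos _).le, two_mul]

end

theorem stmt_6_general {Ω : Type*} {m : MeasurableSpace Ω} {P : Measure Ω}
    [IsProbabilityMeasure P] (n : ℕ) (μ x : ℝ) (hx : 0 < x)
    (X : ℕ → Ω → ℝ) (hmeas : ∀ i, Measurable (X i))
    (hindep : iIndepFun X P)
    (hbdd : ∀ i, ∀ᵐ ω ∂P, X i ω ∈ Set.Icc (0:ℝ) 1)
    (hmean : ∀ i, ∫ ω, X i ω ∂P = μ) :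
    P {ω | ∃ i, 1 ≤ i ∧ i ≤ n ∧
        x < |∑ j ∈ Finset.Icc 1 i, (X j ω - μ)|} ≤
      ENNReal.ofReal (2 * Real.exp (-2 * x ^ 2 / n)) := by
  have h := measure_exists_lt_abs_sum_range_le_of_mem_Icc (Y := fun j ω ↦ X (j + 1) ω - μ)
    (a := -μ) (b := 1 - μ) (fun j ↦ (hmeas _).sub_const μ)
    ((hindep.precomp Nat.succ_injective).comp (fun _ y ↦ y - μ) fun _ ↦ measurable_sub_const μ)
    (fun j ↦ by
      filter_upwards [hbdd (j + 1)] with ω hω using ⟨by linarith [hω.1], by linarith [hω.2]⟩)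
    (fun j ↦ by
      simp [integral_sub (Integrable.of_mem_Icc 0 1 (hmeas _).aemeasurable (hbdd _))
        (integrable_const μ), hmean]) hx.le n
  rw [sub_neg_eq_add, sub_add_cancel, one_pow, mul_one] at h
  refine le_trans (measure_mono ?_) h
  rintro ω ⟨i, -, hin, hxi⟩
  refine ⟨i, hin, ?_⟩
  rw [← Ico_add_one_right_eq_Icc, sum_Ico_eq_sum_range, Nat.add_sub_cancel] at hxi
  simpa only [add_comm 1] using hxi

theorem stmt_6 {Ω : Type*} {m : MeasurableSpace Ω} {P : Measure Ω}
    [IsProbabilityMeasure P] (n : ℕ) (hn : 1 ≤ n) (μ x : ℝ) (hx : 0 < x)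
    (X : ℕ → Ω → ℝ) (hmeas : ∀ i, Measurable (X i))
    (hindep : iIndepFun X P)
    (hident : ∀ i, IdentDistrib (X i) (X 1) P P)
    (hbdd : ∀ i, ∀ᵐ ω ∂P, X i ω ∈ Set.Icc (0:ℝ) 1)
    (hmean : ∀ i, ∫ ω, X i ω ∂P = μ) :
    P {ω | ∃ i, 1 ≤ i ∧ i ≤ n ∧
        x < |∑ j ∈ Finset.Icc 1 i, (X j ω - μ)|} ≤
      ENNReal.ofReal (2 * Real.exp (-2 * x ^ 2 / n)) :=
  stmt_6_general (m := m) n μ x hx X hmeas hindep hbdd hmean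
end

section
/- Let X be distributed according to Beta(α, β) with positive integers α, β and α + β ≥ 2, and let ρ = (α−1)/(α+β−1). Then for any y > 0, P(|X − ρ| ≥ y) ≤ 2·exp(−(α+β−1)·y²). -/
open MeasureTheory

/-- The Beta(α,β) measure on ℝ (integer parameters), defined by its density
`x^(α−1)(1−x)^(β−1) / B(α,β)` on `[0,1]`. -/
noncomputable def betaMeasureNat (α β : ℕ) : Measure ℝ :=
  (volume : Measure ℝ).withDensity fun x =>
    Set.indicator (Set.Icc (0:ℝ) 1)
      (fun x => ENNReal.ofReal
        (((α + β - 1).factorial : ℝ) / ((α - 1).factorial * (β - 1).factorial) *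
          (x ^ (α - 1) * (1 - x) ^ (β - 1)))) x

/-!
With `α = j + 1`, `β = m + 1` and `n = j + m + 1`, the Beta density is `-d/dx P(Bin(n, x) ≤ j)`:
differentiating the Bernstein sum `∑_{k ≤ j} C(n,k) x^k (1-x)^(n-k)` telescopes to
`-n C(n-1,j) x^j (1-x)^(n-1-j)`. Hence `Beta([u, v]) = P(Bin(n, u) ≤ j) - P(Bin(n, v) ≤ j)`, and
the two tails of the Beta law beyond `ρ ± y`, where `ρ = j / n`, are binomial tails
`P(Bin(n, ρ - y) ≥ j + 1)` and `P(Bin(n, ρ + y) ≤ j)`. Since `j = nρ`, Hoeffding's inequality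
(Chernoff's bound with Hoeffding's lemma for a Bernoulli variable) bounds each by `exp(-2ny²)`.
-/

open ProbabilityTheory Finset Polynomial Real
open scoped unitInterval

theorem one_sub_add_mul_exp_le (p : I) (t : ℝ) :
    1 - p + p * exp t ≤ exp (p * t + t ^ 2 / 8) := by
  have hIcc : ∀ᵐ x ∂Ber((1 : ℝ), 0, p), x ∈ Set.Icc (0 : ℝ) 1 := by
    rw [ae_iff]
    exact bernoulliMeasure_apply_of_notMem_of_notMem p measurableSet_Icc.compl (by simp) (by simp)
  have hmgf : p * exp (t * (1 - p)) + (1 - p) * exp (-(t * p)) ≤ exp (t ^ 2 / 8) := by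
    convert (hasSubgaussianMGF_of_mem_Icc aemeasurable_id hIcc).mgf_le t using 1
    · simp [mgf, integral_bernoulliMeasure]
    · norm_num; ring_nf
  have h1 : exp (p * t) * exp (t * (1 - p)) = exp t := by
    rw [← exp_add]; ring_nf
  have h0 : exp (p * t) * exp (-(t * p)) = 1 := by
    rw [← exp_add, ← exp_zero]; ring_nf
  calc 1 - p + p * exp t
      = exp (p * t) * (p * exp (t * (1 - p)) + (1 - p) * exp (-(t * p))) := by
        linear_combination (-(p : ℝ)) * h1 - (1 - (p : ℝ)) * h0
    _ ≤ exp (p * t) * exp (t ^ 2 / 8) := by gcongr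
    _ = exp (p * t + t ^ 2 / 8) := (exp_add _ _).symm

theorem sum_range_bernstein_mul_exp (n : ℕ) (x : I) (l : ℝ) :
    ∑ k ∈ range (n + 1), bernstein n k x * exp (l * k) = (x * exp l + (1 - x)) ^ n := by
  rw [add_pow]
  refine sum_congr rfl fun k _ => ?_
  rw [bernstein_apply, mul_pow, ← exp_nat_mul, mul_comm l]
  ring

theorem sum_bernstein_le_exp (n : ℕ) {S : Finset ℕ} (hS : S ⊆ range (n + 1)) (x : I)
    {l c : ℝ} (hlc : ∀ k ∈ S, 0 ≤ l * (k - c)) :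
    ∑ k ∈ S, bernstein n k x ≤ exp (l * (n * x - c) + n * l ^ 2 / 8) := by
  calc ∑ k ∈ S, bernstein n k x
      ≤ ∑ k ∈ S, bernstein n k x * exp (l * (k - c)) :=
        sum_le_sum fun k hk => le_mul_of_one_le_right bernstein_nonneg (one_le_exp (hlc k hk))
    _ ≤ ∑ k ∈ range (n + 1), bernstein n k x * exp (l * (k - c)) :=
        sum_le_sum_of_subset_of_nonneg hS fun k _ _ => by positivity
    _ = exp (-(l * c)) * (x * exp l + (1 - x)) ^ n := by
        simp_rw [mul_sub, sub_eq_add_neg (l * _), exp_add, ← mul_assoc, ← sum_mul,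
          sum_range_bernstein_mul_exp, mul_comm]
    _ ≤ exp (-(l * c)) * exp (x * l + l ^ 2 / 8) ^ n := by
        gcongr
        · exact add_nonneg (mul_nonneg x.2.1 (exp_pos l).le) (sub_nonneg.2 x.2.2)
        · linarith [one_sub_add_mul_exp_le x l]
    _ = exp (l * (n * x - c) + n * l ^ 2 / 8) := by
        rw [← exp_nat_mul, ← exp_add]
        ring_nf

theorem sum_bernstein_le_exp_of_add_le (n : ℕ) {S : Finset ℕ} (hS : S ⊆ range (n + 1)) (x : I)
    {t : ℝ} (ht : 0 ≤ t) (hk : ∀ k ∈ S, n * ((x : ℝ) + t) ≤ k) :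
    ∑ k ∈ S, bernstein n k x ≤ exp (-(2 * n * t ^ 2)) :=
  (sum_bernstein_le_exp n hS x (l := 4 * t) (c := n * ((x : ℝ) + t))
    fun k hkS => mul_nonneg (by linarith) (by linarith [hk k hkS])).trans_eq (by ring_nf)

theorem sum_bernstein_le_exp_of_le_sub (n : ℕ) {S : Finset ℕ} (hS : S ⊆ range (n + 1)) (x : I)
    {t : ℝ} (ht : 0 ≤ t) (hk : ∀ k ∈ S, k ≤ n * ((x : ℝ) - t)) :
    ∑ k ∈ S, bernstein n k x ≤ exp (-(2 * n * t ^ 2)) :=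
  (sum_bernstein_le_exp n hS x (l := -(4 * t)) (c := n * ((x : ℝ) - t))
    fun k hkS => mul_nonneg_of_nonpos_of_nonpos (by linarith) (by linarith [hk k hkS])).trans_eq
    (by ring_nf)

theorem bernsteinPolynomial.derivative_sum_range (R : Type*) [CommRing R] (n ν : ℕ) :
    derivative (∑ k ∈ range (ν + 1), bernsteinPolynomial R n k) =
      -(n * bernsteinPolynomial R (n - 1) ν) := by
  induction ν with
  | zero => simp [bernsteinPolynomial.derivative_zero]
  | succ ν ih =>
    rw [sum_range_succ, derivative_add, ih, bernsteinPolynomial.derivative_succ]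
    ring

/-- `binomialCDF n j x = P(Bin(n, x) ≤ j)`, the paper's `F^B_{n,x}(j)`. -/
noncomputable def binomialCDF (n j : ℕ) (x : ℝ) : ℝ :=
  ∑ k ∈ range (j + 1), (bernsteinPolynomial ℝ n k).eval x

theorem hasDerivAt_binomialCDF (n j : ℕ) (x : ℝ) :
    HasDerivAt (binomialCDF n j) (-(n * (bernsteinPolynomial ℝ (n - 1) j).eval x)) x := by
  have h := (∑ k ∈ range (j + 1), bernsteinPolynomial ℝ n k).hasDerivAt x
  rw [bernsteinPolynomial.derivative_sum_range, eval_neg, eval_mul, eval_natCast] at h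
  have hF : binomialCDF n j = fun x => (∑ k ∈ range (j + 1), bernsteinPolynomial ℝ n k).eval x :=
    funext fun x => by simp [binomialCDF, eval_finsetSum]
  rwa [hF]

theorem binomialCDF_zero (n j : ℕ) : binomialCDF n j 0 = 1 := by
  simp [binomialCDF, bernsteinPolynomial.eval_at_0]

theorem binomialCDF_one {n j : ℕ} (h : j < n) : binomialCDF n j 1 = 0 := by
  refine sum_eq_zero fun k hk => ?_
  rw [bernsteinPolynomial.eval_at_1, if_neg]
  have := mem_range.1 hk
  omega

theorem one_sub_binomialCDF {n j : ℕ} (h : j ≤ n) (x : I) :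
    1 - binomialCDF n j x = ∑ k ∈ Ico (j + 1) (n + 1), bernstein n k x := by
  rw [← bernstein.probability n x, Fin.sum_univ_eq_sum_range (fun k => bernstein n k x),
    ← sum_range_add_sum_Ico _ (by omega : j + 1 ≤ n + 1)]
  simp [binomialCDF, bernstein]

theorem withDensity_indicator_Icc_apply_Icc {F f : ℝ → ℝ} (hF : ∀ x, HasDerivAt F (f x) x)
    (hf : Continuous f) {a b u v : ℝ} (hf0 : ∀ x ∈ Set.Icc a b, 0 ≤ f x)
    (hau : a ≤ u) (huv : u ≤ v) (hvb : v ≤ b) :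
    volume.withDensity ((Set.Icc a b).indicator fun x => ENNReal.ofReal (f x)) (Set.Icc u v) =
      ENNReal.ofReal (F v - F u) := by
  have hsub : Set.Icc u v ⊆ Set.Icc a b := Set.Icc_subset_Icc hau hvb
  rw [withDensity_indicator measurableSet_Icc, withDensity_apply _ measurableSet_Icc,
    Measure.restrict_restrict measurableSet_Icc, Set.inter_eq_left.2 hsub,
    ← ofReal_integral_eq_lintegral_ofReal hf.integrableOn_Icc
      ((ae_restrict_iff' measurableSet_Icc).2 (ae_of_all _ fun x hx => hf0 x (hsub hx))),
    integral_Icc_eq_integral_Ioc, ← intervalIntegral.integral_of_le huv,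
    intervalIntegral.integral_eq_sub_of_hasDerivAt (fun x _ => hF x) (hf.intervalIntegrable u v)]

theorem betaMeasureNat_compl_Icc (α β : ℕ) : betaMeasureNat α β (Set.Icc 0 1)ᶜ = 0 := by
  unfold betaMeasureNat
  rw [withDensity_indicator measurableSet_Icc]
  exact withDensity_absolutelyContinuous _ _ (Measure.restrict_apply_self _ _ ▸ by simp)

theorem betaMeasureNat_succ_succ (j m : ℕ) :
    betaMeasureNat (j + 1) (m + 1) = volume.withDensity ((Set.Icc 0 1).indicator fun x =>
      ENNReal.ofReal ((j + m + 1 : ℕ) * (bernsteinPolynomial ℝ (j + m) j).eval x)) := by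
  have hcoeff : ((j + m + 1).factorial : ℝ) / (j.factorial * m.factorial) =
      (j + m + 1 : ℕ) * ((j + m).choose j : ℕ) := by
    rw [Nat.cast_add_choose, Nat.factorial_succ]
    push_cast
    ring
  unfold betaMeasureNat
  simp only [Nat.add_sub_cancel, show j + 1 + (m + 1) - 1 = j + m + 1 by omega, hcoeff,
    bernsteinPolynomial, Nat.add_sub_cancel_left]
  simp [mul_assoc]

theorem betaMeasureNat_Icc (j m : ℕ) {u v : ℝ} (hu : 0 ≤ u) (huv : u ≤ v) (hv : v ≤ 1) :
    betaMeasureNat (j + 1) (m + 1) (Set.Icc u v) =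
      ENNReal.ofReal (binomialCDF (j + m + 1) j u - binomialCDF (j + m + 1) j v) := by
  rw [betaMeasureNat_succ_succ, ← neg_sub_neg]
  refine withDensity_indicator_Icc_apply_Icc (F := fun x => -binomialCDF (j + m + 1) j x)
    (fun x => ?_) ((Polynomial.continuous _).const_mul _) (fun x hx => ?_) hu huv hv
  · have h := (hasDerivAt_binomialCDF (j + m + 1) j x).neg
    rw [neg_neg, Nat.add_sub_cancel] at h
    exact h
  · exact mul_nonneg (Nat.cast_nonneg _) (bernstein_nonneg (x := ⟨x, hx⟩))

theorem betaMeasureNat_Iic_sub_le (j m : ℕ) {y : ℝ} (hy : 0 ≤ y) :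
    betaMeasureNat (j + 1) (m + 1) (Set.Iic (j / (j + m + 1) - y)) ≤
      ENNReal.ofReal (exp (-(2 * (j + m + 1) * y ^ 2))) := by
  set a : ℝ := j / (j + m + 1) - y with ha_def
  have ha1 : a ≤ 1 := by
    have : (j : ℝ) / (j + m + 1) ≤ 1 := div_le_one_of_le₀ (by linarith) (by positivity)
    linarith
  calc betaMeasureNat (j + 1) (m + 1) (Set.Iic a)
      = betaMeasureNat (j + 1) (m + 1) (Set.Iic a ∩ Set.Icc 0 1) :=
        (measure_inter_conull (betaMeasureNat_compl_Icc _ _)).symm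
    _ ≤ betaMeasureNat (j + 1) (m + 1) (Set.Icc 0 a) := measure_mono fun x hx => ⟨hx.2.1, hx.1⟩
    _ ≤ _ := by
      rcases lt_or_ge a 0 with ha0 | ha0
      · simp [Set.Icc_eq_empty_of_lt ha0]
      rw [betaMeasureNat_Icc j m le_rfl ha0 ha1, binomialCDF_zero]
      refine ENNReal.ofReal_le_ofReal ?_
      rw [show a = ((⟨a, ha0, ha1⟩ : I) : ℝ) from rfl, one_sub_binomialCDF (by omega)]
      have hj : ((j + m + 1 : ℕ) : ℝ) * (a + y) = j := by
        rw [ha_def]; push_cast; field_simp; ring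
      have key := sum_bernstein_le_exp_of_add_le (j + m + 1) (S := Ico (j + 1) (j + m + 1 + 1))
        (fun k hk => by simp at hk ⊢; omega) ⟨a, ha0, ha1⟩ hy (fun k hk => by
          rw [hj]; exact_mod_cast Nat.le_of_succ_le (mem_Ico.1 hk).1)
      push_cast at key
      exact key

theorem betaMeasureNat_Ici_add_le (j m : ℕ) {y : ℝ} (hy : 0 ≤ y) :
    betaMeasureNat (j + 1) (m + 1) (Set.Ici (j / (j + m + 1) + y)) ≤
      ENNReal.ofReal (exp (-(2 * (j + m + 1) * y ^ 2))) := by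
  set b : ℝ := j / (j + m + 1) + y with hb_def
  have hb0 : 0 ≤ b := by positivity
  calc betaMeasureNat (j + 1) (m + 1) (Set.Ici b)
      = betaMeasureNat (j + 1) (m + 1) (Set.Ici b ∩ Set.Icc 0 1) :=
        (measure_inter_conull (betaMeasureNat_compl_Icc _ _)).symm
    _ ≤ betaMeasureNat (j + 1) (m + 1) (Set.Icc b 1) := measure_mono fun x hx => ⟨hx.1, hx.2.2⟩
    _ ≤ _ := by
      rcases lt_or_ge 1 b with hb1 | hb1
      · simp [Set.Icc_eq_empty_of_lt hb1]
      rw [betaMeasureNat_Icc j m hb0 hb1 le_rfl, binomialCDF_one (by omega), sub_zero]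
      refine ENNReal.ofReal_le_ofReal ?_
      have hj : ((j + m + 1 : ℕ) : ℝ) * (b - y) = j := by
        rw [hb_def]; push_cast; field_simp; ring
      have key := sum_bernstein_le_exp_of_le_sub (j + m + 1) (S := range (j + 1))
        (range_subset_range.2 (by omega)) ⟨b, hb0, hb1⟩ hy (fun k hk => by
          rw [hj]; exact_mod_cast Nat.le_of_lt_succ (mem_range.1 hk))
      push_cast at key
      exact key

theorem stmt_8_general (α β : ℕ) (hα : 1 ≤ α) (hβ : 1 ≤ β)
    (y : ℝ) (hy : 0 < y) :
    let ρ : ℝ := ((α : ℝ) - 1) / ((α : ℝ) + β - 1)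
    betaMeasureNat α β {x : ℝ | y ≤ |x - ρ|} ≤
      ENNReal.ofReal (2 * Real.exp (-(((α : ℝ) + β - 1) * y ^ 2))) := by
  obtain ⟨j, rfl⟩ := Nat.exists_eq_add_of_le' hα
  obtain ⟨m, rfl⟩ := Nat.exists_eq_add_of_le' hβ
  intro ρ
  have hρ : ρ = j / (j + m + 1) := by simp only [ρ]; push_cast; ring_nf
  have hn : ((j + 1 : ℕ) : ℝ) + (m + 1 : ℕ) - 1 = j + m + 1 := by push_cast; ring
  have hε : exp (-(2 * (j + m + 1) * y ^ 2)) ≤ exp (-((j + m + 1) * y ^ 2)) := by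
    gcongr; nlinarith [sq_nonneg y]
  set ε := exp (-(2 * (j + m + 1) * y ^ 2))
  calc betaMeasureNat (j + 1) (m + 1) {x | y ≤ |x - ρ|}
      ≤ betaMeasureNat (j + 1) (m + 1)
          (Set.Iic (j / (j + m + 1) - y) ∪ Set.Ici (j / (j + m + 1) + y)) := by
        refine measure_mono fun x (hx : y ≤ |x - ρ|) => ?_
        rcases le_abs'.1 hx with h | h
        · left; simp only [Set.mem_Iic]; linarith
        · right; simp only [Set.mem_Ici]; linarith
    _ ≤ ENNReal.ofReal ε + ENNReal.ofReal ε := (measure_union_le _ _).trans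
        (add_le_add (betaMeasureNat_Iic_sub_le j m hy.le) (betaMeasureNat_Ici_add_le j m hy.le))
    _ ≤ _ := by
        rw [← ENNReal.ofReal_add (by positivity) (by positivity), hn]
        exact ENNReal.ofReal_le_ofReal (by linarith)

theorem stmt_8 (α β : ℕ) (hα : 1 ≤ α) (hβ : 1 ≤ β) (hαβ : 2 ≤ α + β)
    (y : ℝ) (hy : 0 < y) :
    let ρ : ℝ := ((α : ℝ) - 1) / ((α : ℝ) + β - 1)
    betaMeasureNat α β {x : ℝ | y ≤ |x - ρ|} ≤
      ENNReal.ofReal (2 * Real.exp (-(((α : ℝ) + β - 1) * y ^ 2))) :=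
  stmt_8_general α β hα hβ y hy
end

section
/- Let (μ₁, μ₂) be drawn from a prior P on [0,1]² with E[μ₁] > E[μ₂]. Suppose at each round t, an agent observes history H_t and chooses arm 2 if and only if E[μ₁ − μ₂ | H_t] ≤ 0 (receiving a Bernoulli reward from the chosen arm, appended to the history). Then the probability that arm 2 is never chosen in T rounds is at least E[μ₁ − μ₂]. -/
/-!
Let `Z t = E[μ₁ − μ₂ | ℱ t]`. Split the event that some `Z t`, `1 ≤ t ≤ T`, is nonpositive
according to the first such `t`: the piece with first time `t` lies in `ℱ t` and `Z t ≤ 0` on it,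
so by the defining property of the conditional expectation `μ₁ − μ₂` integrates to at most `0`
over it. On the complementary event `μ₁ − μ₂ ≤ 1`, hence `E[μ₁ − μ₂]` is at most its probability.
-/

open MeasureTheory

namespace MeasureTheory

variable {Ω ι : Type*} {m : MeasurableSpace Ω} [LinearOrder ι]

lemma Filtration.measurableSet_exists_le_zero {ℱ : Filtration ι m} {Z : ι → Ω → ℝ}
    (hZ : ∀ t, StronglyMeasurable[ℱ t] (Z t)) {s : Finset ι} {a : ι} (hs : ∀ t ∈ s, t ≤ a) :
    MeasurableSet[ℱ a] {ω | ∃ t ∈ s, Z t ω ≤ 0} := by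
  have hunion : {ω | ∃ t ∈ s, Z t ω ≤ 0} = ⋃ t ∈ s, {ω | Z t ω ≤ 0} := by
    ext ω
    simp
  rw [hunion]
  exact Finset.measurableSet_biUnion s fun t ht =>
    ((hZ t).mono (ℱ.mono (hs t ht))).measurable measurableSet_Iic

lemma setIntegral_exists_condExp_nonpos {P : Measure Ω} [IsFiniteMeasure P] (ℱ : Filtration ι m)
    {X : Ω → ℝ} (hX : Integrable X P) (s : Finset ι) :
    ∫ ω in {ω | ∃ t ∈ s, P[X | ℱ t] ω ≤ 0}, X ω ∂P ≤ 0 := by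
  classical
  have hZ : ∀ t, StronglyMeasurable[ℱ t] (P[X | ℱ t]) := fun t => stronglyMeasurable_condExp
  induction s using Finset.induction_on_max with
  | empty => simp
  | insert a s hlt ih =>
    set E := {ω | ∃ t ∈ s, P[X | ℱ t] ω ≤ 0}
    set F := {ω | P[X | ℱ a] ω ≤ 0} \ E
    have hE : MeasurableSet[ℱ a] E :=
      Filtration.measurableSet_exists_le_zero hZ fun t ht => (hlt t ht).le
    have hF : MeasurableSet[ℱ a] F := ((hZ a).measurable measurableSet_Iic).diff hE
    have hsplit : {ω | ∃ t ∈ insert a s, P[X | ℱ t] ω ≤ 0} = E ∪ F := by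
      rw [Set.union_sdiff_self]
      ext ω
      simp [E, or_comm]
    have hF_int : ∫ ω in F, X ω ∂P ≤ 0 := by
      rw [← setIntegral_condExp (ℱ.le a) hX hF]
      exact setIntegral_nonpos (ℱ.le a _ hF) fun ω hω => hω.1
    rw [hsplit, setIntegral_union Set.disjoint_sdiff_right (ℱ.le a _ hF) hX.integrableOn
      hX.integrableOn]
    linarith

end MeasureTheory

theorem stmt_13_general {Ω : Type*} {m : MeasurableSpace Ω} {P : Measure Ω}
    [IsProbabilityMeasure P] (ℱ : Filtration ℕ m) (T : ℕ)
    (μ₁ μ₂ : Ω → ℝ) (h₁ : Measurable μ₁) (h₂ : Measurable μ₂)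
    (hb₁ : ∀ ω, μ₁ ω ∈ Set.Icc (0:ℝ) 1) (hb₂ : ∀ ω, μ₂ ω ∈ Set.Icc (0:ℝ) 1) :
    ENNReal.ofReal (∫ ω, (μ₁ ω - μ₂ ω) ∂P) ≤
      P {ω | ∀ t, 1 ≤ t → t ≤ T → 0 < (P[fun ω' => μ₁ ω' - μ₂ ω' | ℱ t]) ω} := by
  set X : Ω → ℝ := fun ω => μ₁ ω - μ₂ ω
  set A := {ω | ∀ t, 1 ≤ t → t ≤ T → 0 < P[X | ℱ t] ω}
  have hX_le : ∀ ω, X ω ≤ 1 := fun ω => by linarith [(hb₁ ω).2, (hb₂ ω).1]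
  have hX : Integrable X P := by
    refine Integrable.of_bound (h₁.sub h₂).aestronglyMeasurable 1 (ae_of_all _ fun ω => ?_)
    rw [Real.norm_eq_abs, abs_le]
    constructor <;> linarith [(hb₁ ω).1, (hb₁ ω).2, (hb₂ ω).1, (hb₂ ω).2]
  have hA_compl : Aᶜ = {ω | ∃ t ∈ Finset.Icc 1 T, P[X | ℱ t] ω ≤ 0} := by
    ext ω
    simp [A, and_assoc]
  have hA : MeasurableSet A := by
    rw [← MeasurableSet.compl_iff, hA_compl]
    exact ℱ.le T _ (Filtration.measurableSet_exists_le_zero (fun _ => stronglyMeasurable_condExp)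
      fun t ht => (Finset.mem_Icc.mp ht).2)
  have hA_int : ∫ ω in A, X ω ∂P ≤ P.real A := by
    simpa using setIntegral_mono_on hX.integrableOn (integrable_const 1).integrableOn hA
      fun ω _ => hX_le ω
  have hAc_int : ∫ ω in Aᶜ, X ω ∂P ≤ 0 :=
    hA_compl ▸ setIntegral_exists_condExp_nonpos ℱ hX _
  rw [← ofReal_measureReal, ← integral_add_compl hA hX]
  exact ENNReal.ofReal_le_ofReal (by linarith)

/-- Bayesian-unbiased agents: `μ₁, μ₂` are the arms' mean rewards drawn from
a prior; `ℱ t` is the σ-algebra generated by the history `H_t`; the agent in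
round `t` chooses arm 2 iff `E[μ₁ − μ₂ | H_t] ≤ 0`, i.e. arm 2 is never chosen
in rounds `1..T` iff `E[μ₁ − μ₂ | ℱ t] > 0` for all `t ∈ [T]`. -/
theorem stmt_13 {Ω : Type*} {m : MeasurableSpace Ω} {P : Measure Ω}
    [IsProbabilityMeasure P] (ℱ : Filtration ℕ m) (T : ℕ)
    (μ₁ μ₂ : Ω → ℝ) (h₁ : Measurable μ₁) (h₂ : Measurable μ₂)
    (hb₁ : ∀ ω, μ₁ ω ∈ Set.Icc (0:ℝ) 1) (hb₂ : ∀ ω, μ₂ ω ∈ Set.Icc (0:ℝ) 1)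
    (hmean : ∫ ω, μ₂ ω ∂P < ∫ ω, μ₁ ω ∂P) :
    ENNReal.ofReal (∫ ω, (μ₁ ω - μ₂ ω) ∂P) ≤
      P {ω | ∀ t, 1 ≤ t → t ≤ T → 0 < (P[fun ω' => μ₁ ω' - μ₂ ω' | ℱ t]) ω} :=
  stmt_13_general ℱ T μ₁ μ₂ h₁ h₂ hb₁ hb₂
end

section
/- Let (X_i)_{i≥1} be i.i.d. Bernoulli(p) with p ∈ (c, 1−c) for a constant c ∈ (0, 1/2), and let q ∈ [0, p). Consider the event E that X_1 = 1 and for all n ≥ 1, Σ_{i=2}^{n+1}(X_i − q) ≥ q − 1. Then E implies that for all n ≥ 1, (1/n)Σ_{i=1}^n X_i ≥ q, and P(E) ≥ p·(1 − u^{1−q}) where u ∈ (0,1) satisfies p·u^{1−q} + (1−p)·u^{−q} = 1. -/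
/-!
Put `S n = ∑ i ∈ Icc 2 (n + 1), (X i - q)`. The equation for `u` says exactly that each
`u ^ (X i - q)` has mean one, so `u ^ S n` is a product of independent nonnegative mean-one
factors. For such products Ville's inequality `c * P (∃ n, c ≤ ∏ i < n, W i) ≤ 1` holds: the
quantity `c * P (level c reached by time N) + E[∏ i < N, W i; level not reached by time N]`
starts at most `1` and does not increase, because the next factor has mean one and is
independent of the past. With `c = u ^ (q - 1)` and `u < 1` this bounds the probability that `S`
ever drops below `q - 1` by `u ^ (1 - q)`. That event depends only on `X 2, X 3, …`, hence is
independent of `{X 1 = 1}`. The deterministic part is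
`∑ i ∈ Icc 1 n, (X i - q) = 1 - q + S (n - 1)`.
-/

open MeasureTheory ProbabilityTheory Finset
open scoped ENNReal

section

variable {Ω : Type*} {mΩ : MeasurableSpace Ω} {P : Measure Ω}

lemma measurable_of_mem_iSup_comap {ι β : Type*} [mβ : MeasurableSpace β] {X : ι → Ω → β}
    {s : Set ι} {i : ι} (hi : i ∈ s) : Measurable[⨆ j ∈ s, mβ.comap (X j)] (X i) :=
  Measurable.of_comap_le (le_iSup₂ (f := fun j (_ : j ∈ s) => mβ.comap (X j)) i hi)

lemma measure_inter_eq_mul_of_iIndepFun {ι β : Type*} [mβ : MeasurableSpace β]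
    {X : ι → Ω → β} (hX : ∀ i, Measurable (X i)) (hind : iIndepFun X P) {S T : Set ι}
    (hST : Disjoint S T) {A B : Set Ω} (hA : MeasurableSet[⨆ i ∈ S, mβ.comap (X i)] A)
    (hB : MeasurableSet[⨆ i ∈ T, mβ.comap (X i)] B) : P (A ∩ B) = P A * P B :=
  (Indep_iff _ _ _).1 (indep_iSup_of_disjoint (fun i => (hX i).comap_le) hind.iIndep hST) A B hA hB

variable {W : ℕ → Ω → ℝ≥0∞}

lemma measurableSet_forall_prod_range_lt {m : MeasurableSpace Ω} {N : ℕ}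
    (hW : ∀ i < N, Measurable[m] (W i)) (c : ℝ≥0∞) :
    MeasurableSet[m] {ω | ∀ n ≤ N, ∏ i ∈ range n, W i ω < c} := by
  simp only [Set.ofPred_forall]
  exact .iInter fun n => .iInter fun hn => measurableSet_lt
    (Finset.measurable_prod _ fun i hi => hW i (by simp at hi; omega)) measurable_const

lemma setLIntegral_prod_range_succ (hW : ∀ i, Measurable (W i)) (hind : iIndepFun W P)
    (hmean : ∀ i, ∫⁻ ω, W i ω ∂P = 1) {N : ℕ} {A : Set Ω}
    (hA : MeasurableSet[⨆ j ∈ Set.Iio N, MeasurableSpace.comap (W j) inferInstance] A) :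
    ∫⁻ ω in A, ∏ i ∈ range (N + 1), W i ω ∂P = ∫⁻ ω in A, ∏ i ∈ range N, W i ω ∂P := by
  have hle : ∀ s : Set ℕ, ⨆ j ∈ s, MeasurableSpace.comap (W j) inferInstance ≤ mΩ :=
    fun s => iSup₂_le fun i _ => (hW i).comap_le
  rw [← lintegral_indicator (hle _ _ hA), ← lintegral_indicator (hle _ _ hA)]
  simp_rw [prod_range_succ, Set.indicator_mul_left]
  rw [lintegral_mul_eq_lintegral_mul_lintegral_of_independent_measurableSpace (hle _) (hle {N})
    (indep_iSup_of_disjoint (fun i => (hW i).comap_le) hind.iIndep (by simp))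
    ((Finset.measurable_prod _ fun i hi => measurable_of_mem_iSup_comap
      (Set.mem_Iio.2 (by simpa using hi))).indicator hA)
    (measurable_of_mem_iSup_comap (Set.mem_singleton _)), hmean, mul_one]

lemma measurableSet_forall_le_sum_range {m : MeasurableSpace Ω} {Y : ℕ → Ω → ℝ}
    (hY : ∀ i, Measurable[m] (Y i)) (a : ℝ) :
    MeasurableSet[m] {ω | ∀ n, a ≤ ∑ i ∈ range n, Y i ω} := by
  simp only [Set.ofPred_forall]
  exact .iInter fun n => measurableSet_le measurable_const (Finset.measurable_sum _ fun i _ => hY i)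

variable [IsProbabilityMeasure P]

theorem mul_measure_exists_le_prod_add_setLIntegral_le_one (hW : ∀ i, Measurable (W i))
    (hind : iIndepFun W P) (hmean : ∀ i, ∫⁻ ω, W i ω ∂P = 1) (c : ℝ≥0∞) (N : ℕ) :
    c * P {ω | ∃ n ≤ N, c ≤ ∏ i ∈ range n, W i ω} +
      ∫⁻ ω in {ω | ∀ n ≤ N, ∏ i ∈ range n, W i ω < c}, ∏ i ∈ range N, W i ω ∂P ≤ 1 := by
  induction N with
  | zero =>
    by_cases hc : c ≤ 1
    · simp [hc, not_lt.2 hc]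
    · simp [hc, not_le.1 hc]
  | succ N ih =>
    set alive := {ω | ∀ n ≤ N, ∏ i ∈ range n, W i ω < c}
    set crossing := {ω | c ≤ ∏ i ∈ range (N + 1), W i ω}
    have hprod : Measurable fun ω => ∏ i ∈ range (N + 1), W i ω :=
      Finset.measurable_prod _ fun i _ => hW i
    have hsurvive : {ω | ∀ n ≤ N + 1, ∏ i ∈ range n, W i ω < c} = alive \ crossing := by
      ext ω
      simp [alive, crossing, Nat.le_succ_iff, or_imp, forall_and]
    have hsplit : ∫⁻ ω in alive ∩ crossing, ∏ i ∈ range (N + 1), W i ω ∂P +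
        ∫⁻ ω in {ω | ∀ n ≤ N + 1, ∏ i ∈ range n, W i ω < c}, ∏ i ∈ range (N + 1), W i ω ∂P =
        ∫⁻ ω in alive, ∏ i ∈ range N, W i ω ∂P := by
      rw [hsurvive, lintegral_inter_add_sdiff _ alive (measurableSet_le measurable_const hprod),
        setLIntegral_prod_range_succ hW hind hmean
          (measurableSet_forall_prod_range_lt (fun i hi => measurable_of_mem_iSup_comap hi) c)]
    have hmarkov : c * P (alive ∩ crossing) ≤
        ∫⁻ ω in alive ∩ crossing, ∏ i ∈ range (N + 1), W i ω ∂P := by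
      rw [← setLIntegral_const]
      exact setLIntegral_mono hprod fun ω hω => hω.2
    have hsub : {ω | ∃ n ≤ N + 1, c ≤ ∏ i ∈ range n, W i ω} ⊆
        {ω | ∃ n ≤ N, c ≤ ∏ i ∈ range n, W i ω} ∪ (alive ∩ crossing) := by
      rintro ω ⟨n, hn, hcn⟩
      by_cases hω : ω ∈ alive
      · refine Or.inr ⟨hω, ?_⟩
        rcases Nat.le_succ_iff.1 hn with hn | rfl
        · exact absurd (hω n hn) (not_lt.2 hcn)
        · exact hcn
      · exact Or.inl (by simpa [alive] using hω)
    calc _ ≤ c * (P {ω | ∃ n ≤ N, c ≤ ∏ i ∈ range n, W i ω} + P (alive ∩ crossing)) +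
          ∫⁻ ω in {ω | ∀ n ≤ N + 1, ∏ i ∈ range n, W i ω < c}, ∏ i ∈ range (N + 1), W i ω ∂P := by
          gcongr
          exact (measure_mono hsub).trans (measure_union_le _ _)
      _ ≤ _ := by
          rw [mul_add, add_assoc]
          refine le_trans ?_ ih
          gcongr
          rw [← hsplit]
          gcongr

theorem mul_measure_exists_le_prod_le_one (hW : ∀ i, Measurable (W i))
    (hind : iIndepFun W P) (hmean : ∀ i, ∫⁻ ω, W i ω ∂P = 1) (c : ℝ≥0∞) :
    c * P {ω | ∃ n, c ≤ ∏ i ∈ range n, W i ω} ≤ 1 := by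
  have hunion : {ω | ∃ n, c ≤ ∏ i ∈ range n, W i ω} =
      ⋃ N, {ω | ∃ n ≤ N, c ≤ ∏ i ∈ range n, W i ω} := by
    ext ω
    simp only [Set.mem_iUnion, Set.mem_ofPred_eq]
    exact ⟨fun ⟨n, hn⟩ => ⟨n, n, le_rfl, hn⟩, fun ⟨_, n, _, hn⟩ => ⟨n, hn⟩⟩
  have hmono : Monotone fun N => {ω | ∃ n ≤ N, c ≤ ∏ i ∈ range n, W i ω} :=
    fun N M h ω ⟨n, hn, hc⟩ => ⟨n, hn.trans h, hc⟩
  rw [hunion, hmono.measure_iUnion, ENNReal.mul_iSup]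
  exact iSup_le fun N =>
    le_self_add.trans (mul_measure_exists_le_prod_add_setLIntegral_le_one hW hind hmean c N)

theorem measure_exists_sum_range_lt_le {Y : ℕ → Ω → ℝ} (hY : ∀ i, Measurable (Y i))
    (hind : iIndepFun Y P) {u : ℝ} (hu0 : 0 < u) (hu1 : u ≤ 1)
    (hmean : ∀ i, ∫⁻ ω, ENNReal.ofReal (u ^ Y i ω) ∂P = 1) (a : ℝ) :
    P {ω | ∃ n, ∑ i ∈ range n, Y i ω < a} ≤ ENNReal.ofReal (u ^ (-a)) := by
  set W : ℕ → Ω → ℝ≥0∞ := fun i ω => ENNReal.ofReal (u ^ Y i ω)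
  have hW : ∀ i, Measurable (W i) := fun i => by fun_prop
  have hWind : iIndepFun W P := hind.comp (fun _ x => ENNReal.ofReal (u ^ x)) fun _ => by fun_prop
  have hsub : {ω | ∃ n, ∑ i ∈ range n, Y i ω < a} ⊆
      {ω | ∃ n, ENNReal.ofReal (u ^ a) ≤ ∏ i ∈ range n, W i ω} := by
    rintro ω ⟨n, hn⟩
    refine ⟨n, ?_⟩
    rw [← ENNReal.ofReal_prod_of_nonneg fun i _ => (Real.rpow_pos_of_pos hu0 _).le,
      ← Real.rpow_sum_of_pos hu0]
    exact ENNReal.ofReal_le_ofReal (Real.rpow_le_rpow_of_exponent_ge hu0 hu1 hn.le)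
  have hbound := mul_measure_exists_le_prod_le_one hW hWind hmean (ENNReal.ofReal (u ^ a))
  rw [Real.rpow_neg hu0.le, ENNReal.ofReal_inv_of_pos (Real.rpow_pos_of_pos hu0 a)]
  exact (measure_mono hsub).trans (ENNReal.le_inv_iff_mul_le.2 (by rwa [mul_comm]))

theorem ofReal_one_sub_rpow_le_measure_forall_le_sum_range {Y : ℕ → Ω → ℝ}
    (hY : ∀ i, Measurable (Y i)) (hind : iIndepFun Y P) {u : ℝ} (hu0 : 0 < u) (hu1 : u ≤ 1)
    (hmean : ∀ i, ∫⁻ ω, ENNReal.ofReal (u ^ Y i ω) ∂P = 1) (a : ℝ) :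
    ENNReal.ofReal (1 - u ^ (-a)) ≤ P {ω | ∀ n, a ≤ ∑ i ∈ range n, Y i ω} := by
  have hcompl : {ω | ∀ n, a ≤ ∑ i ∈ range n, Y i ω} = {ω | ∃ n, ∑ i ∈ range n, Y i ω < a}ᶜ := by
    ext ω
    simp
  have hmeas := measurableSet_forall_le_sum_range hY a
  rw [hcompl] at hmeas
  rw [hcompl, prob_compl_eq_one_sub hmeas.of_compl,
    ENNReal.ofReal_sub _ (Real.rpow_pos_of_pos hu0 _).le, ENNReal.ofReal_one]
  gcongr
  exact measure_exists_sum_range_lt_le hY hind hu0 hu1 hmean a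

lemma lintegral_comp_of_ae_eq_zero_or_one {X : Ω → ℝ} (hX : Measurable X)
    (h01 : ∀ᵐ ω ∂P, X ω = 0 ∨ X ω = 1) (f : ℝ → ℝ≥0∞) :
    ∫⁻ ω, f (X ω) ∂P = P {ω | X ω = 1} * f 1 + (1 - P {ω | X ω = 1}) * f 0 := by
  have hA : MeasurableSet {ω | X ω = 1} := hX (measurableSet_singleton 1)
  rw [← lintegral_add_compl _ hA, ← prob_compl_eq_one_sub hA,
    setLIntegral_congr_fun hA fun ω (hω : X ω = 1) => by rw [hω],
    setLIntegral_congr_fun_ae hA.compl (h01.mono fun ω h hω => by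
      rw [h.resolve_right hω]),
    setLIntegral_const, setLIntegral_const, mul_comm, mul_comm (f 0)]

lemma lintegral_ofReal_comp_of_ae_eq_zero_or_one {X : Ω → ℝ} (hX : Measurable X)
    (h01 : ∀ᵐ ω ∂P, X ω = 0 ∨ X ω = 1) {p : ℝ} (hp0 : 0 ≤ p)
    (hp : P {ω | X ω = 1} = ENNReal.ofReal p) {f : ℝ → ℝ} (hf0 : 0 ≤ f 0) (hf1 : 0 ≤ f 1) :
    ∫⁻ ω, ENNReal.ofReal (f (X ω)) ∂P = ENNReal.ofReal (p * f 1 + (1 - p) * f 0) := by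
  have hp1 : p ≤ 1 := ENNReal.ofReal_le_one.1 (hp ▸ prob_le_one)
  rw [lintegral_comp_of_ae_eq_zero_or_one hX h01 (fun x => ENNReal.ofReal (f x)), hp,
    ← ENNReal.ofReal_one, ← ENNReal.ofReal_sub _ hp0, ← ENNReal.ofReal_mul hp0,
    ← ENNReal.ofReal_mul (by linarith),
    ← ENNReal.ofReal_add (mul_nonneg hp0 hf1) (mul_nonneg (by linarith) hf0)]

lemma le_sum_Icc_div_of_le_sum_Icc_sub {x : ℕ → ℝ} {q : ℝ} (hq : q ≤ 1) (h1 : x 1 = 1)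
    (h : ∀ n, 1 ≤ n → q - 1 ≤ ∑ i ∈ Icc 2 (n + 1), (x i - q)) {n : ℕ} (hn : 1 ≤ n) :
    q ≤ (∑ i ∈ Icc 1 n, x i) / n := by
  obtain ⟨k, rfl⟩ : ∃ k, n = k + 1 := ⟨n - 1, by omega⟩
  have hk : q - 1 ≤ ∑ i ∈ Icc 2 (k + 1), (x i - q) := by
    rcases Nat.eq_zero_or_pos k with rfl | hk
    · simpa using hq
    · exact h k hk
  rw [sum_sub_distrib, sum_const, Nat.card_Icc, nsmul_eq_mul] at hk
  rw [le_div_iff₀ (by positivity), ← sum_Ioc_add_eq_sum_Icc (by omega), ← Icc_add_one_left_eq_Ioc,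
    h1]
  push_cast [show k + 1 + 1 - 2 = k by omega] at hk ⊢
  linarith

lemma sum_Icc_two_eq_sum_range {M : Type*} [AddCommMonoid M] (g : ℕ → M) (n : ℕ) :
    ∑ i ∈ Icc 2 (n + 1), g i = ∑ j ∈ range n, g (j + 2) := by
  rw [range_eq_Ico, sum_Ico_add' g 0 n 2, zero_add, ← Ico_add_one_right_eq_Icc]
  rfl

end

theorem stmt_14_general {Ω : Type*} {m : MeasurableSpace Ω} {P : Measure Ω}
    [IsProbabilityMeasure P] (p q u : ℝ)
    (hq : q ∈ Set.Ico 0 p)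
    (hu : u ∈ Set.Ioo (0:ℝ) 1)
    (huEq : p * u ^ (1 - q) + (1 - p) * u ^ (-q) = 1)
    (X : ℕ → Ω → ℝ) (hmeas : ∀ i, Measurable (X i))
    (hindep : iIndepFun X P)
    (hbern01 : ∀ i, ∀ᵐ ω ∂P, X i ω = 0 ∨ X i ω = 1)
    (hbernp : ∀ i, P {ω | X i ω = 1} = ENNReal.ofReal p) :
    (∀ ω, (X 1 ω = 1 ∧
        ∀ n : ℕ, 1 ≤ n → q - 1 ≤ ∑ i ∈ Finset.Icc 2 (n + 1), (X i ω - q)) →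
      ∀ n : ℕ, 1 ≤ n → q ≤ (∑ i ∈ Finset.Icc 1 n, X i ω) / n) ∧
    ENNReal.ofReal (p * (1 - u ^ (1 - q))) ≤
      P {ω | X 1 ω = 1 ∧
        ∀ n : ℕ, 1 ≤ n → q - 1 ≤ ∑ i ∈ Finset.Icc 2 (n + 1), (X i ω - q)} := by
  have hp0 : 0 ≤ p := hq.1.trans hq.2.le
  have hq1 : q ≤ 1 := hq.2.le.trans (ENNReal.ofReal_le_one.1 (hbernp 1 ▸ prob_le_one))
  refine ⟨fun ω ⟨h1, h⟩ n hn => le_sum_Icc_div_of_le_sum_Icc_sub hq1 h1 h hn, ?_⟩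
  have hmean (i : ℕ) : ∫⁻ ω, ENNReal.ofReal (u ^ (X (i + 2) ω - q)) ∂P = 1 := by
    rw [lintegral_ofReal_comp_of_ae_eq_zero_or_one (f := fun x => u ^ (x - q)) (hmeas _)
      (hbern01 _) hp0 (hbernp _) (Real.rpow_nonneg hu.1.le _) (Real.rpow_nonneg hu.1.le _),
      zero_sub, huEq, ENNReal.ofReal_one]
  have hsurvive := ofReal_one_sub_rpow_le_measure_forall_le_sum_range
    (fun j => (hmeas (j + 2)).sub_const q)
    ((hindep.precomp (add_left_injective 2)).comp (fun _ x => x - q) fun _ => by fun_prop)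
    hu.1 hu.2.le hmean (q - 1)
  have htail := measurableSet_forall_le_sum_range
    (m := ⨆ j ∈ Set.Ici 2, MeasurableSpace.comap (X j) inferInstance)
    (fun j => (measurable_of_mem_iSup_comap (by simp : j + 2 ∈ Set.Ici 2)).sub_const q) (q - 1)
  calc ENNReal.ofReal (p * (1 - u ^ (1 - q)))
      ≤ P {ω | X 1 ω = 1} * P {ω | ∀ n, q - 1 ≤ ∑ j ∈ range n, (X (j + 2) ω - q)} := by
        rw [hbernp 1, ENNReal.ofReal_mul hp0, ← neg_sub q 1]
        gcongr
    _ = P ({ω | X 1 ω = 1} ∩ {ω | ∀ n, q - 1 ≤ ∑ j ∈ range n, (X (j + 2) ω - q)}) :=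
        (measure_inter_eq_mul_of_iIndepFun hmeas hindep (S := {1}) (by simp)
          (measurable_of_mem_iSup_comap (Set.mem_singleton _) (measurableSet_singleton 1))
          htail).symm
    _ ≤ _ := measure_mono fun ω hω =>
        And.intro hω.1 fun n _ => (sum_Icc_two_eq_sum_range (fun i => X i ω - q) n).symm ▸ hω.2 n

theorem stmt_14 {Ω : Type*} {m : MeasurableSpace Ω} {P : Measure Ω}
    [IsProbabilityMeasure P] (c p q u : ℝ) (hc : 0 < c) (hc' : c < 1/2)
    (hp : p ∈ Set.Ioo c (1 - c)) (hq : q ∈ Set.Ico 0 p)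
    (hu : u ∈ Set.Ioo (0:ℝ) 1)
    (huEq : p * u ^ (1 - q) + (1 - p) * u ^ (-q) = 1)
    (X : ℕ → Ω → ℝ) (hmeas : ∀ i, Measurable (X i))
    (hindep : iIndepFun X P)
    (hbern01 : ∀ i, ∀ᵐ ω ∂P, X i ω = 0 ∨ X i ω = 1)
    (hbernp : ∀ i, P {ω | X i ω = 1} = ENNReal.ofReal p) :
    (∀ ω, (X 1 ω = 1 ∧
        ∀ n : ℕ, 1 ≤ n → q - 1 ≤ ∑ i ∈ Finset.Icc 2 (n + 1), (X i ω - q)) →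
      ∀ n : ℕ, 1 ≤ n → q ≤ (∑ i ∈ Finset.Icc 1 n, X i ω) / n) ∧
    ENNReal.ofReal (p * (1 - u ^ (1 - q))) ≤
      P {ω | X 1 ω = 1 ∧
        ∀ n : ℕ, 1 ≤ n → q - 1 ≤ ∑ i ∈ Finset.Icc 2 (n + 1), (X i ω - q)} :=
  stmt_14_general (m := m) p q u hq hu huEq X hmeas hindep hbern01 hbernp
end

section
/- For two Bernoulli distributions with parameters q and p where 0 < c ≤ min(p, 1−p), the KL divergence satisfies D(q ∥ p) ≤ (2/c)·(p − q)². -/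
theorem stmt_15 (c p q : ℝ) (hc : 0 < c) (hpc : c ≤ min p (1 - p))
    (hq : q ∈ Set.Icc (0:ℝ) 1) :
    q * Real.log (q / p) + (1 - q) * Real.log ((1 - q) / (1 - p)) ≤
      (2 / c) * (p - q) ^ 2 := by
  obtain ⟨hq0, hq1⟩ := hq
  have hcp : c ≤ p := le_trans hpc (min_le_left _ _)
  have hc1p : c ≤ 1 - p := le_trans hpc (min_le_right _ _)
  have hp : 0 < p := lt_of_lt_of_le hc hcp
  have h1p : 0 < 1 - p := lt_of_lt_of_le hc hc1p
  have key : c / 2 ≤ p * (1 - p) := by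
    rcases le_total p (1/2) with h | h
    · nlinarith
    · nlinarith
  have h1 : q * Real.log (q / p) ≤ q * (q / p - 1) := by
    rcases eq_or_lt_of_le hq0 with h | h
    · simp [← h]
    · exact mul_le_mul_of_nonneg_left
        (Real.log_le_sub_one_of_pos (div_pos h hp)) hq0
  have h2 : (1 - q) * Real.log ((1 - q) / (1 - p)) ≤ (1 - q) * ((1 - q) / (1 - p) - 1) := by
    rcases eq_or_lt_of_le hq1 with h | h
    · simp [h]
    · exact mul_le_mul_of_nonneg_left
        (Real.log_le_sub_one_of_pos (div_pos (by linarith) h1p)) (by linarith)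
  have h3 : q * (q / p - 1) + (1 - q) * ((1 - q) / (1 - p) - 1) = (p - q)^2 / (p * (1 - p)) := by
    field_simp
    ring
  have h4 : (p - q)^2 / (p * (1 - p)) ≤ (p - q)^2 / (c / 2) := by
    gcongr
  have h5 : (p - q)^2 / (c / 2) = (2 / c) * (p - q)^2 := by
    field_simp
  linarith
end

section
/- In the bandit social learning model with two arms, suppose every agent t has index Ind_{a,t} ∈ [max(0, μ̂_{a,t} − sqrt(η/n_{a,t})), min(1, μ̂_{a,t} + sqrt(η/n_{a,t}))] for each arm a, where n_{a,t} is the number of samples of arm a in the history and μ̂_{a,t} the empirical mean, and each agent chooses an arm with largest index. Fix thresholds q₁ < q₂ with q₂ − q₁ > 2·sqrt(η/N₀), where N₀ is the number of initial samples per arm. If the average of the first N₀ tape rewards of arm 1 is at most q₁, and for every n ∈ [T] the average of the first n tape rewards of arm 2 is at least q₂, then no agent ever chooses arm 1. -/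
/-!
As long as arm `1` is the only arm pulled, arm `0` keeps its `N₀` initial samples, so its index
is at most `q₁ + √(η / N₀)`, while arm `1` has `N₀ + t` samples with average at least `q₂`, so
its index is at least `q₂ - √(η / N₀)`. The gap condition makes the second bound strictly
larger, so the next agent pulls arm `1` again; induct on the round.
-/

/-- Number of samples of `arm` available to agent `t` (initial `N₀` samples
plus the pulls by agents in rounds `0,…,t−1`). -/
def numSamples (a : ℕ → Fin 2) (N₀ t : ℕ) (arm : Fin 2) : ℕ :=
  N₀ + ((Finset.range t).filter fun s => a s = arm).card

/-- Average of the first `n` tape rewards of `arm`. -/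
noncomputable def tapeAvg (tape : Fin 2 → ℕ → ℝ) (arm : Fin 2) (n : ℕ) : ℝ :=
  (∑ i ∈ Finset.range n, tape arm i) / n

lemma numSamples_eq_of_forall_ne {a : ℕ → Fin 2} {N₀ t : ℕ} {arm : Fin 2}
    (h : ∀ s < t, a s ≠ arm) : numSamples a N₀ t arm = N₀ := by
  rw [numSamples, Finset.filter_false_of_mem fun s hs => h s (Finset.mem_range.mp hs),
    Finset.card_empty, add_zero]

lemma numSamples_eq_of_forall_eq {a : ℕ → Fin 2} {N₀ t : ℕ} {arm : Fin 2}
    (h : ∀ s < t, a s = arm) : numSamples a N₀ t arm = N₀ + t := by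
  rw [numSamples, Finset.filter_true_of_mem fun s hs => h s (Finset.mem_range.mp hs),
    Finset.card_range]

lemma sqrt_div_le_sqrt_div_of_le (x : ℝ) {m n : ℝ} (hm : 0 < m) (hmn : m ≤ n) :
    √(x / n) ≤ √(x / m) := by
  rw [Real.sqrt_div' x (hm.le.trans hmn), Real.sqrt_div' x hm.le]
  exact div_le_div_of_nonneg_left (Real.sqrt_nonneg x) (Real.sqrt_pos.2 hm)
    (Real.sqrt_le_sqrt hmn)

lemma index_zero_lt_index_one_of_forall_lt_eq_one {N₀ t : ℕ} (hN₀ : 1 ≤ N₀) {η : ℝ}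
    {tape : Fin 2 → ℕ → ℝ} {a : ℕ → Fin 2} {Ind : Fin 2 → ℝ}
    (hConf : ∀ arm : Fin 2,
      Ind arm ∈ Set.Icc
        (max 0 (tapeAvg tape arm (numSamples a N₀ t arm) -
          √(η / (numSamples a N₀ t arm))))
        (min 1 (tapeAvg tape arm (numSamples a N₀ t arm) +
          √(η / (numSamples a N₀ t arm)))))
    {q₁ q₂ : ℝ} (hGap : 2 * √(η / N₀) < q₂ - q₁) (hArm1 : tapeAvg tape 0 N₀ ≤ q₁)
    (hArm2 : q₂ ≤ tapeAvg tape 1 (N₀ + t)) (hprev : ∀ s < t, a s = 1) :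
    Ind 0 < Ind 1 := by
  have hn₀ : numSamples a N₀ t 0 = N₀ :=
    numSamples_eq_of_forall_ne fun s hs => by simp [hprev s hs]
  have hn₁ : numSamples a N₀ t 1 = N₀ + t := numSamples_eq_of_forall_eq hprev
  have hsqrt : √(η / (N₀ + t : ℕ)) ≤ √(η / N₀) :=
    sqrt_div_le_sqrt_div_of_le η (by exact_mod_cast hN₀) (by exact_mod_cast N₀.le_add_right t)
  have hInd₀ : Ind 0 ≤ q₁ + √(η / N₀) := by
    have := (hConf 0).2
    rw [hn₀] at this
    linarith [min_le_right 1 (tapeAvg tape 0 N₀ + √(η / N₀))]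
  have hInd₁ : q₂ - √(η / N₀) ≤ Ind 1 := by
    have := (hConf 1).1
    rw [hn₁] at this
    linarith [le_max_right 0 (tapeAvg tape 1 (N₀ + t) - √(η / (N₀ + t : ℕ)))]
  linarith

theorem stmt_17_general (T N₀ : ℕ) (hN₀ : 1 ≤ N₀) (η : ℝ)
    (tape : Fin 2 → ℕ → ℝ) (a : ℕ → Fin 2) (Ind : ℕ → Fin 2 → ℝ)
    (hConf : ∀ t < T, ∀ arm : Fin 2,
      Ind t arm ∈ Set.Icc
        (max 0 (tapeAvg tape arm (numSamples a N₀ t arm) -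
          Real.sqrt (η / (numSamples a N₀ t arm))))
        (min 1 (tapeAvg tape arm (numSamples a N₀ t arm) +
          Real.sqrt (η / (numSamples a N₀ t arm)))))
    (hChoice : ∀ t < T, ∀ arm : Fin 2, Ind t arm ≤ Ind t (a t))
    (q₁ q₂ : ℝ) (hGap : 2 * Real.sqrt (η / N₀) < q₂ - q₁)
    (hArm1 : tapeAvg tape 0 N₀ ≤ q₁)
    (hArm2 : ∀ n : ℕ, 1 ≤ n → n ≤ N₀ + T → q₂ ≤ tapeAvg tape 1 n) :
    ∀ t < T, a t ≠ 0 := by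
  intro t
  induction t using Nat.strong_induction_on with
  | _ t ih =>
    intro ht hat
    have hprev : ∀ s < t, a s = 1 := fun s hs =>
      Fin.eq_one_of_ne_zero _ (ih s hs (hs.trans ht))
    have hlt := index_zero_lt_index_one_of_forall_lt_eq_one hN₀ (hConf t ht) hGap hArm1
      (hArm2 (N₀ + t) (by omega) (by omega)) hprev
    have hle := hChoice t ht 1
    rw [hat] at hle
    exact hle.not_gt hlt

/-- Arm `0` is the good arm (arm 1 of the paper), arm `1` is the bad arm
(arm 2 of the paper). `Ind t arm` is the index of `arm` for agent `t`;
`a t` is the arm chosen in round `t` (an arm of largest index). -/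
theorem stmt_17 (T N₀ : ℕ) (hN₀ : 1 ≤ N₀) (η : ℝ) (hη : 0 ≤ η)
    (tape : Fin 2 → ℕ → ℝ) (a : ℕ → Fin 2) (Ind : ℕ → Fin 2 → ℝ)
    (hConf : ∀ t < T, ∀ arm : Fin 2,
      Ind t arm ∈ Set.Icc
        (max 0 (tapeAvg tape arm (numSamples a N₀ t arm) -
          Real.sqrt (η / (numSamples a N₀ t arm))))
        (min 1 (tapeAvg tape arm (numSamples a N₀ t arm) +
          Real.sqrt (η / (numSamples a N₀ t arm)))))
    (hChoice : ∀ t < T, ∀ arm : Fin 2, Ind t arm ≤ Ind t (a t))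
    (q₁ q₂ : ℝ) (hq : q₁ < q₂) (hGap : 2 * Real.sqrt (η / N₀) < q₂ - q₁)
    (hArm1 : tapeAvg tape 0 N₀ ≤ q₁)
    (hArm2 : ∀ n : ℕ, 1 ≤ n → n ≤ N₀ + T → q₂ ≤ tapeAvg tape 1 n) :
    ∀ t < T, a t ≠ 0 :=
  stmt_17_general T N₀ hN₀ η tape a Ind hConf hChoice q₁ q₂ hGap hArm1 hArm2
end
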